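/- arXiv:2605.25907 — 6 statements merged into one kernel-verified Lean document; each statement's English description precedes it below -/
import Mathlib

section
/- Let 𝐆 = {G_1, G_2, G_3, G_4} be a collection of not necessarily distinct simple graphs on a common 5-vertex set V with δ(G_i) ≥ 3 for each i ∈ {1, 2, 3, 4}. Then 𝐆 is rainbow panconnected. -/
set_option autoImplicit false

/-- `IsRainbowPathOn G D S k x y`: in the graph collection `G` (with relevant
indices `D`), there is a rainbow path on `k` vertices from `x` to `y`, all of
whose vertices lie in `S`: the vertices are `u 0, u 1, …, u (k-1)`, pairwise
distinct, and the edges get pairwise distinct colors `c 0, …, c (k-2)` from `D`,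
the `i`-th edge lying in the graph `G (c i)`. -/
def IsRainbowPathOn {V : Type*} (G : ℕ → SimpleGraph V) (D : Finset ℕ)
    (S : Set V) (k : ℕ) (x y : V) : Prop :=
  ∃ (u : ℕ → V) (c : ℕ → ℕ),
    (∀ i, i < k → u i ∈ S) ∧
    (∀ i j, i < k → j < k → u i = u j → i = j) ∧
    (∀ i, i + 1 < k → c i ∈ D) ∧
    (∀ i j, i + 1 < k → j + 1 < k → c i = c j → i = j) ∧
    0 < k ∧ u 0 = x ∧ u (k - 1) = y ∧
    (∀ i, i + 1 < k → (G (c i)).Adj (u i) (u (i + 1)))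

/-- The number of edges of a shortest rainbow path between `x` and `y`. -/
noncomputable def rainbowDist {V : Type*} (G : ℕ → SimpleGraph V) (D : Finset ℕ)
    (x y : V) : ℕ :=
  sInf {d : ℕ | IsRainbowPathOn G D Set.univ (d + 1) x y}

/-- The collection `G` (indices `D`) on the finite vertex type `V` is rainbow
panconnected: for every pair of distinct vertices `x, y` and every
`k` with `rainbowDist x y + 1 ≤ k ≤ |V|` there is a rainbow `k`-path
joining `x` and `y`. -/
def RainbowPanconnected {V : Type*} [Fintype V] (G : ℕ → SimpleGraph V)
    (D : Finset ℕ) : Prop :=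
  ∀ x y : V, x ≠ y → ∀ k : ℕ,
    rainbowDist G D x y + 1 ≤ k → k ≤ Fintype.card V →
    IsRainbowPathOn G D Set.univ k x y

/-- `IsFCollection n m G`: the graphs `G 1, …, G m` (on an `n`-vertex set, `n` odd)
all equal `Q₁ ∨ Q₂` where `Q₁` is an empty graph on `(n-1)/2` vertices and `Q₂` is a
graph on the remaining `(n+1)/2` vertices with minimum degree at least `1` having
a connected component which is a single edge. -/
def IsFCollection {V : Type*} (n m : ℕ) (G : ℕ → SimpleGraph V) : Prop :=
  ∃ (S : Set V) (G0 : SimpleGraph V),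
    2 * S.ncard = n - 1 ∧ 2 * Sᶜ.ncard = n + 1 ∧
    (∀ i ∈ Finset.Icc 1 m, G i = G0) ∧
    (∀ a ∈ S, ∀ b ∈ S, ¬ G0.Adj a b) ∧
    (∀ a ∈ S, ∀ b ∈ Sᶜ, G0.Adj a b) ∧
    (∀ a ∈ Sᶜ, ∃ b ∈ Sᶜ, G0.Adj a b) ∧
    (∃ a ∈ Sᶜ, ∃ b ∈ Sᶜ, G0.Adj a b ∧
      (∀ v ∈ Sᶜ, G0.Adj a v → v = b) ∧ (∀ v ∈ Sᶜ, G0.Adj b v → v = a))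

/-- A rainbow cycle on `l` vertices, all lying in `S`, in the collection `G`
with color set `D`. -/
def HasRainbowCycleOn {V : Type*} (G : ℕ → SimpleGraph V) (D : Finset ℕ)
    (S : Set V) (l : ℕ) : Prop :=
  ∃ (u : ℕ → V) (c : ℕ → ℕ),
    (∀ i, i < l → u i ∈ S) ∧
    (∀ i j, i < l → j < l → u i = u j → i = j) ∧
    (∀ i, i < l → c i ∈ D) ∧
    (∀ i j, i < l → j < l → c i = c j → i = j) ∧
    3 ≤ l ∧
    (∀ i, i < l → (G (c i)).Adj (u i) (u ((i + 1) % l)))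

/-- A rainbow Hamiltonian cycle on the set `S` (of `l` vertices) in the
collection `G` with color set `D`: a rainbow cycle passing through every
vertex of `S`. -/
def HasRainbowHamCycleOn {V : Type*} (G : ℕ → SimpleGraph V) (D : Finset ℕ)
    (S : Set V) (l : ℕ) : Prop :=
  ∃ (u : ℕ → V) (c : ℕ → ℕ),
    (∀ i j, i < l → j < l → u i = u j → i = j) ∧
    (∀ v : V, v ∈ S ↔ ∃ i, i < l ∧ u i = v) ∧
    (∀ i, i < l → c i ∈ D) ∧
    (∀ i j, i < l → j < l → c i = c j → i = j) ∧
    3 ≤ l ∧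
    (∀ i, i < l → (G (c i)).Adj (u i) (u ((i + 1) % l)))

/-- A rainbow Hamiltonian path on the set `S` (of `l` vertices) in the
collection `G` with color set `D`: a rainbow path passing through every
vertex of `S`. -/
def HasRainbowHamPathOn {V : Type*} (G : ℕ → SimpleGraph V) (D : Finset ℕ)
    (S : Set V) (l : ℕ) : Prop :=
  ∃ (u : ℕ → V) (c : ℕ → ℕ),
    (∀ i j, i < l → j < l → u i = u j → i = j) ∧
    (∀ v : V, v ∈ S ↔ ∃ i, i < l ∧ u i = v) ∧
    (∀ i, i + 1 < l → c i ∈ D) ∧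
    (∀ i j, i + 1 < l → j + 1 < l → c i = c j → i = j) ∧
    0 < l ∧
    (∀ i, i + 1 < l → (G (c i)).Adj (u i) (u (i + 1)))


/-- The set of colors (indices in `[1,4]`) whose graph contains the edge `ab`. -/
noncomputable def colorSet {V : Type*} (G : ℕ → SimpleGraph V) (a b : V) : Finset ℕ :=
  @Finset.filter ℕ (fun t => (G t).Adj a b) (fun _ => Classical.propDecidable _) (Finset.Icc 1 4)

lemma mem_colorSet {V : Type*} {G : ℕ → SimpleGraph V} {a b : V} {t : ℕ} :
    t ∈ colorSet G a b ↔ t ∈ Finset.Icc 1 4 ∧ (G t).Adj a b := by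
  unfold colorSet
  exact @Finset.mem_filter ℕ (fun t => (G t).Adj a b) (fun _ => Classical.propDecidable _) _ _

lemma colorSet_comm {V : Type*} (G : ℕ → SimpleGraph V) (a b : V) :
    colorSet G a b = colorSet G b a := by
  ext t
  simp only [mem_colorSet]
  constructor
  · rintro ⟨h1, h2⟩; exact ⟨h1, h2.symm⟩
  · rintro ⟨h1, h2⟩; exact ⟨h1, h2.symm⟩

lemma consec_mem : ∀ n : ℕ, n ≤ 4 → ∀ s : Finset (Fin n), 3 ≤ s.card →
    ∃ i j : Fin n, i ∈ s ∧ j ∈ s ∧ (j : ℕ) = (i : ℕ) + 1 := by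
  intro n hn
  interval_cases n <;> decide

lemma buildRainbowPath {V : Type*} (G : ℕ → SimpleGraph V) (k : ℕ) (hk5 : k ≤ 5) (hk0 : 0 < k)
    (u : ℕ → V)
    (hinj : ∀ i j, i < k → j < k → u i = u j → i = j)
    (h2 : ∀ i, i + 1 < k → 2 ≤ (colorSet G (u i) (u (i + 1))).card)
    (hun : ∀ i, i + 2 < k →
      Finset.Icc 1 4 ⊆ colorSet G (u i) (u (i + 1)) ∪ colorSet G (u (i + 1)) (u (i + 2))) :
    IsRainbowPathOn G (Finset.Icc 1 4) Set.univ k (u 0) (u (k - 1)) := by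
  classical
  set n := k - 1 with hn
  have hall : ∀ s : Finset (Fin n),
      s.card ≤ (s.biUnion (fun i : Fin n => colorSet G (u (i : ℕ)) (u ((i : ℕ) + 1)))).card := by
    intro s
    rcases s.eq_empty_or_nonempty with rfl | ⟨i, hi⟩
    · simp
    by_cases h3 : 3 ≤ s.card
    · obtain ⟨i, j, his, hjs, hij⟩ := consec_mem n (by omega) s h3
      have hjn : (j : ℕ) < n := j.isLt
      have hik : (i : ℕ) + 2 < k := by omega
      have hsub : Finset.Icc 1 4 ⊆
          s.biUnion (fun i : Fin n => colorSet G (u (i : ℕ)) (u ((i : ℕ) + 1))) := by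
        intro t ht
        rcases Finset.mem_union.mp (hun (i : ℕ) hik ht) with h | h
        · exact Finset.mem_biUnion.mpr ⟨i, his, h⟩
        · refine Finset.mem_biUnion.mpr ⟨j, hjs, ?_⟩
          show t ∈ colorSet G (u (j : ℕ)) (u ((j : ℕ) + 1))
          rw [hij]
          exact h
      have h4 : 4 ≤ (s.biUnion (fun i : Fin n => colorSet G (u (i : ℕ)) (u ((i : ℕ) + 1)))).card := by
        calc 4 = (Finset.Icc 1 4 : Finset ℕ).card := by decide
        _ ≤ _ := Finset.card_le_card hsub
      have h5 : s.card ≤ n := by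
        have := Finset.card_le_univ s
        simpa using this
      omega
    · have hik : (i : ℕ) + 1 < k := by have := i.isLt; omega
      calc s.card ≤ 2 := by omega
      _ ≤ (colorSet G (u (i : ℕ)) (u ((i : ℕ) + 1))).card := h2 _ hik
      _ ≤ _ := Finset.card_le_card (Finset.subset_biUnion_of_mem (fun i : Fin n => colorSet G (u (i : ℕ)) (u ((i : ℕ) + 1))) hi)
  obtain ⟨f, hfinj, hft⟩ :=
    (Finset.all_card_le_biUnion_card_iff_exists_injective
      (fun i : Fin n => colorSet G (u (i : ℕ)) (u ((i : ℕ) + 1)))).mp hall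
  refine ⟨u, fun m => if h : m < n then f ⟨m, h⟩ else 0, fun i _ => trivial, hinj, ?_, ?_, hk0,
    rfl, rfl, ?_⟩
  · intro i hi
    have hi' : i < n := by omega
    simp only [dif_pos hi']
    exact (mem_colorSet.mp (hft ⟨i, hi'⟩)).1
  · intro i j hi hj hcij
    have hi' : i < n := by omega
    have hj' : j < n := by omega
    simp only [dif_pos hi', dif_pos hj'] at hcij
    simpa using congrArg Fin.val (hfinj hcij)
  · intro i hi
    have hi' : i < n := by omega
    simp only [dif_pos hi']
    exact (mem_colorSet.mp (hft ⟨i, hi'⟩)).2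


lemma inj3 {V : Type*} {x a y : V} (h1 : x ≠ a) (h2 : x ≠ y) (h3 : a ≠ y) :
    ∀ i j : ℕ, i < 3 → j < 3 →
      (fun m => match m with | 0 => x | 1 => a | _ => y) i =
      (fun m => match m with | 0 => x | 1 => a | _ => y) j → i = j := by
  intro i j hi hj h
  interval_cases i <;> interval_cases j <;> simp_all

lemma inj4 {V : Type*} {x a b y : V} (h1 : x ≠ a) (h2 : x ≠ b) (h3 : x ≠ y)
    (h4 : a ≠ b) (h5 : a ≠ y) (h6 : b ≠ y) :
    ∀ i j : ℕ, i < 4 → j < 4 →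
      (fun m => match m with | 0 => x | 1 => a | 2 => b | _ => y) i =
      (fun m => match m with | 0 => x | 1 => a | 2 => b | _ => y) j → i = j := by
  intro i j hi hj h
  interval_cases i <;> interval_cases j <;> simp_all

lemma inj5 {V : Type*} {x a b c y : V} (h1 : x ≠ a) (h2 : x ≠ b) (h3 : x ≠ c) (h4 : x ≠ y)
    (h5 : a ≠ b) (h6 : a ≠ c) (h7 : a ≠ y) (h8 : b ≠ c) (h9 : b ≠ y) (h10 : c ≠ y) :
    ∀ i j : ℕ, i < 5 → j < 5 →
      (fun m => match m with | 0 => x | 1 => a | 2 => b | 3 => c | _ => y) i =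
      (fun m => match m with | 0 => x | 1 => a | 2 => b | 3 => c | _ => y) j → i = j := by
  intro i j hi hj h
  interval_cases i <;> interval_cases j <;> simp_all

/-- Four graphs on a common 5-vertex set, each with minimum
degree at least 3, form a rainbow panconnected collection. -/
theorem statement2 {V : Type*} [Fintype V] (hV : Fintype.card V = 5)
    (G : ℕ → SimpleGraph V)
    (hdeg : ∀ i ∈ Finset.Icc 1 4, ∀ v : V, 3 ≤ ((G i).neighborSet v).ncard) :
    RainbowPanconnected G (Finset.Icc 1 4) := by
  classical
  intro x y hxy k hk1 hk2
  rw [hV] at hk2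
  -- Core: in each graph, a vertex is adjacent to at least one of any two other vertices.
  have hcore : ∀ t ∈ Finset.Icc 1 4, ∀ a b c : V, a ≠ b → a ≠ c → b ≠ c →
      ((G t).Adj a b ∨ (G t).Adj a c) := by
    intro t ht a b c hab hac hbc
    by_contra h
    push_neg at h
    have hsub : (G t).neighborSet a ⊆ (Set.univ : Set V) \ {a, b, c} := by
      intro v hv
      simp only [Set.mem_diff, Set.mem_univ, true_and, Set.mem_insert_iff,
        Set.mem_singleton_iff]
      push_neg
      refine ⟨?_, ?_, ?_⟩ <;> rintro rfl
      · exact (G t).irrefl hv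
      · exact h.1 hv
      · exact h.2 hv
    have h1 : ((G t).neighborSet a).ncard ≤ ((Set.univ : Set V) \ {a, b, c}).ncard :=
      Set.ncard_le_ncard hsub (Set.toFinite _)
    have h3 : ({a, b, c} : Set V).ncard = 3 := by
      rw [Set.ncard_insert_of_notMem (by simp [hab, hac]), Set.ncard_pair hbc]
    have h4 : ((Set.univ : Set V) \ {a, b, c}).ncard = 2 := by
      rw [Set.ncard_diff (Set.subset_univ _), h3, Set.ncard_univ, Nat.card_eq_fintype_card, hV]
    have h5 := hdeg t ht a
    omega
  have hunionC : ∀ a m c : V, a ≠ m → a ≠ c → m ≠ c →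
      Finset.Icc 1 4 ⊆ colorSet G a m ∪ colorSet G m c := by
    intro a m c ham hac hmc t ht
    rcases hcore t ht m a c (Ne.symm ham) hmc hac with h | h
    · exact Finset.mem_union_left _ (mem_colorSet.mpr ⟨ht, h.symm⟩)
    · exact Finset.mem_union_right _ (mem_colorSet.mpr ⟨ht, h⟩)
  have goodOr : ∀ a b c : V, a ≠ b → a ≠ c → b ≠ c →
      2 ≤ (colorSet G a b).card ∨ 2 ≤ (colorSet G a c).card := by
    intro a b c hab hac hbc
    have hsub : Finset.Icc 1 4 ⊆ colorSet G a b ∪ colorSet G a c := by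
      intro t ht
      rcases hcore t ht a b c hab hac hbc with h | h
      · exact Finset.mem_union_left _ (mem_colorSet.mpr ⟨ht, h⟩)
      · exact Finset.mem_union_right _ (mem_colorSet.mpr ⟨ht, h⟩)
    have h4 : 4 ≤ (colorSet G a b ∪ colorSet G a c).card := by
      calc 4 = (Finset.Icc 1 4 : Finset ℕ).card := by decide
      _ ≤ _ := Finset.card_le_card hsub
    have h5 := Finset.card_union_le (colorSet G a b) (colorSet G a c)
    omega
  have gsymm : ∀ a b : V, 2 ≤ (colorSet G a b).card → 2 ≤ (colorSet G b a).card := by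
    intro a b h; rwa [colorSet_comm]
  -- extract the three other vertices
  have hcard3 : (Finset.univ \ {x, y} : Finset V).card = 3 := by
    rw [Finset.card_sdiff_of_subset (Finset.subset_univ _), Finset.card_univ, hV,
      Finset.card_insert_of_notMem (by simpa using hxy), Finset.card_singleton]
  obtain ⟨p, q, r, hpq, hpr, hqr, hs⟩ := Finset.card_eq_three.mp hcard3
  have hmem : ∀ v : V, v ∈ ({p, q, r} : Finset V) → v ≠ x ∧ v ≠ y := by
    intro v hv
    rw [← hs] at hv
    simp only [Finset.mem_sdiff, Finset.mem_univ, true_and, Finset.mem_insert,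
      Finset.mem_singleton] at hv
    push_neg at hv
    exact hv
  obtain ⟨hpx, hpy⟩ := hmem p (by simp)
  obtain ⟨hqx, hqy⟩ := hmem q (by simp)
  obtain ⟨hrx, hry⟩ := hmem r (by simp)
  -- path builders
  have mk3 : ∀ a : V, a ≠ x → a ≠ y →
      2 ≤ (colorSet G x a).card → 2 ≤ (colorSet G a y).card →
      IsRainbowPathOn G (Finset.Icc 1 4) Set.univ 3 x y := by
    intro a hax hay g1 g2
    refine buildRainbowPath G 3 (by omega) (by omega)
        (fun m => match m with | 0 => x | 1 => a | _ => y)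
        (inj3 (Ne.symm hax) hxy hay) ?_ ?_
    · intro i hi
      have hi2 : i ≤ 1 := by omega
      interval_cases i
      · exact g1
      · exact g2
    · intro i hi
      have hi2 : i = 0 := by omega
      subst hi2
      exact hunionC x a y (Ne.symm hax) hxy hay
  have mk4 : ∀ a b : V, a ≠ x → a ≠ y → b ≠ x → b ≠ y → a ≠ b →
      2 ≤ (colorSet G x a).card → 2 ≤ (colorSet G a b).card → 2 ≤ (colorSet G b y).card →
      IsRainbowPathOn G (Finset.Icc 1 4) Set.univ 4 x y := by
    intro a b hax hay hbx hby hab g1 g2 g3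
    refine buildRainbowPath G 4 (by omega) (by omega)
        (fun m => match m with | 0 => x | 1 => a | 2 => b | _ => y)
        (inj4 (Ne.symm hax) (Ne.symm hbx) hxy hab hay hby) ?_ ?_
    · intro i hi
      have hi2 : i ≤ 2 := by omega
      interval_cases i
      · exact g1
      · exact g2
      · exact g3
    · intro i hi
      have hi2 : i ≤ 1 := by omega
      interval_cases i
      · exact hunionC x a b (Ne.symm hax) (Ne.symm hbx) hab
      · exact hunionC a b y hab hay hby
  have mk5 : ∀ a b c : V, a ≠ x → a ≠ y → b ≠ x → b ≠ y → c ≠ x → c ≠ y →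
      a ≠ b → a ≠ c → b ≠ c →
      2 ≤ (colorSet G x a).card → 2 ≤ (colorSet G a b).card →
      2 ≤ (colorSet G b c).card → 2 ≤ (colorSet G c y).card →
      IsRainbowPathOn G (Finset.Icc 1 4) Set.univ 5 x y := by
    intro a b c hax hay hbx hby hcx hcy hab hac hbc g1 g2 g3 g4
    refine buildRainbowPath G 5 (by omega) (by omega)
        (fun m => match m with | 0 => x | 1 => a | 2 => b | 3 => c | _ => y)
        (inj5 (Ne.symm hax) (Ne.symm hbx) (Ne.symm hcx) hxy hab hac hay hbc hby hcy) ?_ ?_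
    · intro i hi
      have hi2 : i ≤ 3 := by omega
      interval_cases i
      · exact g1
      · exact g2
      · exact g3
      · exact g4
    · intro i hi
      have hi2 : i ≤ 2 := by omega
      interval_cases i
      · exact hunionC x a b (Ne.symm hax) (Ne.symm hbx) hab
      · exact hunionC a b c hab hac hbc
      · exact hunionC b c y hbc hby hcy
  -- the three path existence results
  have path3 : IsRainbowPathOn G (Finset.Icc 1 4) Set.univ 3 x y := by
    by_cases gxp : 2 ≤ (colorSet G x p).card
    · by_cases gpy : 2 ≤ (colorSet G p y).card
      · exact mk3 p hpx hpy gxp gpy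
      · have gyq : 2 ≤ (colorSet G y q).card :=
          (goodOr y p q (Ne.symm hpy) (Ne.symm hqy) hpq).resolve_left
            (fun h => gpy (gsymm _ _ h))
        have gyr : 2 ≤ (colorSet G y r).card :=
          (goodOr y p r (Ne.symm hpy) (Ne.symm hry) hpr).resolve_left
            (fun h => gpy (gsymm _ _ h))
        rcases goodOr x q r (Ne.symm hqx) (Ne.symm hrx) hqr with h | h
        · exact mk3 q hqx hqy h (gsymm _ _ gyq)
        · exact mk3 r hrx hry h (gsymm _ _ gyr)
    · have gxq : 2 ≤ (colorSet G x q).card :=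
        (goodOr x p q (Ne.symm hpx) (Ne.symm hqx) hpq).resolve_left gxp
      have gxr : 2 ≤ (colorSet G x r).card :=
        (goodOr x p r (Ne.symm hpx) (Ne.symm hrx) hpr).resolve_left gxp
      rcases goodOr y q r (Ne.symm hqy) (Ne.symm hry) hqr with h | h
      · exact mk3 q hqx hqy gxq (gsymm _ _ h)
      · exact mk3 r hrx hry gxr (gsymm _ _ h)
  have path4 : IsRainbowPathOn G (Finset.Icc 1 4) Set.univ 4 x y := by
    by_cases h1 : 2 ≤ (colorSet G p q).card
    · by_cases h2 : 2 ≤ (colorSet G p r).card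
      · by_cases h3 : 2 ≤ (colorSet G q r).card
        · -- all inner pairs good
          by_cases h4 : 2 ≤ (colorSet G x p).card
          · rcases goodOr y q r (Ne.symm hqy) (Ne.symm hry) hqr with h | h
            · exact mk4 p q hpx hpy hqx hqy hpq h4 h1 (gsymm _ _ h)
            · exact mk4 p r hpx hpy hrx hry hpr h4 h2 (gsymm _ _ h)
          · have gxq : 2 ≤ (colorSet G x q).card :=
              (goodOr x p q (Ne.symm hpx) (Ne.symm hqx) hpq).resolve_left h4
            have gxr : 2 ≤ (colorSet G x r).card :=
              (goodOr x p r (Ne.symm hpx) (Ne.symm hrx) hpr).resolve_left h4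
            rcases goodOr y q r (Ne.symm hqy) (Ne.symm hry) hqr with h | h
            · exact mk4 r q hrx hry hqx hqy (Ne.symm hqr) gxr (gsymm _ _ h3) (gsymm _ _ h)
            · exact mk4 q r hqx hqy hrx hry hqr gxq h3 (gsymm _ _ h)
        · -- q r bad, third vertex p
          by_cases h5 : 2 ≤ (colorSet G p y).card
          · have gqx : 2 ≤ (colorSet G q x).card :=
              (goodOr q r x hqr hqx hrx).resolve_left h3
            exact mk4 q p hqx hqy hpx hpy (Ne.symm hpq) (gsymm _ _ gqx) (gsymm _ _ h1) h5
          · have gpx : 2 ≤ (colorSet G p x).card :=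
              (goodOr p y x hpy hpx (Ne.symm hxy)).resolve_left h5
            have gqy : 2 ≤ (colorSet G q y).card :=
              (goodOr q r y hqr hqy hry).resolve_left h3
            exact mk4 p q hpx hpy hqx hqy hpq (gsymm _ _ gpx) h1 gqy
      · -- p r bad, third vertex q
        by_cases h5 : 2 ≤ (colorSet G q y).card
        · have gpx : 2 ≤ (colorSet G p x).card :=
            (goodOr p r x hpr hpx hrx).resolve_left h2
          exact mk4 p q hpx hpy hqx hqy hpq (gsymm _ _ gpx) h1 h5
        · have gqx : 2 ≤ (colorSet G q x).card :=
            (goodOr q y x hqy hqx (Ne.symm hxy)).resolve_left h5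
          have grq : 2 ≤ (colorSet G r q).card :=
            (goodOr r p q (Ne.symm hpr) (Ne.symm hqr) hpq).resolve_left
              (fun h => h2 (gsymm _ _ h))
          have gry : 2 ≤ (colorSet G r y).card :=
            (goodOr r p y (Ne.symm hpr) hry hpy).resolve_left
              (fun h => h2 (gsymm _ _ h))
          exact mk4 q r hqx hqy hrx hry hqr (gsymm _ _ gqx) (gsymm _ _ grq) gry
    · -- p q bad, third vertex r
      by_cases h5 : 2 ≤ (colorSet G r y).card
      · have gpx : 2 ≤ (colorSet G p x).card :=
          (goodOr p q x hpq hpx hqx).resolve_left h1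
        have gpr : 2 ≤ (colorSet G p r).card :=
          (goodOr p q r hpq hpr hqr).resolve_left h1
        exact mk4 p r hpx hpy hrx hry hpr (gsymm _ _ gpx) gpr h5
      · have grx : 2 ≤ (colorSet G r x).card :=
          (goodOr r y x hry hrx (Ne.symm hxy)).resolve_left h5
        have gqr : 2 ≤ (colorSet G q r).card :=
          (goodOr q p r (Ne.symm hpq) hqr hpr).resolve_left
            (fun h => h1 (gsymm _ _ h))
        have gqy : 2 ≤ (colorSet G q y).card :=
          (goodOr q p y (Ne.symm hpq) hqy hpy).resolve_left
            (fun h => h1 (gsymm _ _ h))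
        exact mk4 r q hrx hry hqx hqy (Ne.symm hqr) (gsymm _ _ grx) (gsymm _ _ gqr) gqy
  have path5 : IsRainbowPathOn G (Finset.Icc 1 4) Set.univ 5 x y := by
    by_cases h1 : 2 ≤ (colorSet G p q).card
    · by_cases h2 : 2 ≤ (colorSet G p r).card
      · by_cases h3 : 2 ≤ (colorSet G q r).card
        · by_cases h4 : 2 ≤ (colorSet G x p).card
          · rcases goodOr y q r (Ne.symm hqy) (Ne.symm hry) hqr with h | h
            · exact mk5 p r q hpx hpy hrx hry hqx hqy hpr hpq (Ne.symm hqr)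
                h4 h2 (gsymm _ _ h3) (gsymm _ _ h)
            · exact mk5 p q r hpx hpy hqx hqy hrx hry hpq hpr hqr
                h4 h1 h3 (gsymm _ _ h)
          · have gxq : 2 ≤ (colorSet G x q).card :=
              (goodOr x p q (Ne.symm hpx) (Ne.symm hqx) hpq).resolve_left h4
            have gpy : 2 ≤ (colorSet G p y).card :=
              (goodOr p x y hpx hpy hxy).resolve_left (fun h => h4 (gsymm _ _ h))
            exact mk5 q r p hqx hqy hrx hry hpx hpy hqr (Ne.symm hpq) (Ne.symm hpr)
              gxq h3 (gsymm _ _ h2) gpy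
        · -- q r bad, middle vertex p : x-q-p-r-y
          have gqx : 2 ≤ (colorSet G q x).card :=
            (goodOr q r x hqr hqx hrx).resolve_left h3
          have gry : 2 ≤ (colorSet G r y).card :=
            (goodOr r q y (Ne.symm hqr) hry hqy).resolve_left
              (fun h => h3 (gsymm _ _ h))
          exact mk5 q p r hqx hqy hpx hpy hrx hry (Ne.symm hpq) hqr hpr
            (gsymm _ _ gqx) (gsymm _ _ h1) h2 gry
      · -- p r bad, middle vertex q : x-p-q-r-y
        have gpx : 2 ≤ (colorSet G p x).card :=
          (goodOr p r x hpr hpx hrx).resolve_left h2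
        have grq : 2 ≤ (colorSet G r q).card :=
          (goodOr r p q (Ne.symm hpr) (Ne.symm hqr) hpq).resolve_left
            (fun h => h2 (gsymm _ _ h))
        have gry : 2 ≤ (colorSet G r y).card :=
          (goodOr r p y (Ne.symm hpr) hry hpy).resolve_left
            (fun h => h2 (gsymm _ _ h))
        exact mk5 p q r hpx hpy hqx hqy hrx hry hpq hpr hqr
          (gsymm _ _ gpx) h1 (gsymm _ _ grq) gry
    · -- p q bad, middle vertex r : x-p-r-q-y
      have gpx : 2 ≤ (colorSet G p x).card :=
        (goodOr p q x hpq hpx hqx).resolve_left h1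
      have gpr : 2 ≤ (colorSet G p r).card :=
        (goodOr p q r hpq hpr hqr).resolve_left h1
      have gqr : 2 ≤ (colorSet G q r).card :=
        (goodOr q p r (Ne.symm hpq) hqr hpr).resolve_left
          (fun h => h1 (gsymm _ _ h))
      have gqy : 2 ≤ (colorSet G q y).card :=
        (goodOr q p y (Ne.symm hpq) hqy hpy).resolve_left
          (fun h => h1 (gsymm _ _ h))
      exact mk5 p r q hpx hpy hrx hry hqx hqy hpr hpq (Ne.symm hqr)
        (gsymm _ _ gpx) gpr (gsymm _ _ gqr) gqy
  -- finish
  have hne : {d : ℕ | IsRainbowPathOn G (Finset.Icc 1 4) Set.univ (d + 1) x y}.Nonempty :=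
    ⟨2, path3⟩
  have hmem : rainbowDist G (Finset.Icc 1 4) x y ∈
      {d : ℕ | IsRainbowPathOn G (Finset.Icc 1 4) Set.univ (d + 1) x y} :=
    Nat.sInf_mem hne
  have hd1 : 1 ≤ rainbowDist G (Finset.Icc 1 4) x y := by
    by_contra hcon
    push_neg at hcon
    have h0 : rainbowDist G (Finset.Icc 1 4) x y = 0 := by omega
    rw [h0] at hmem
    obtain ⟨u, c, _, _, _, _, _, hux, huy, _⟩ := hmem
    exact hxy (hux.symm.trans huy)
  have hk2' : 2 ≤ k := by omega
  interval_cases k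
  · have hd : rainbowDist G (Finset.Icc 1 4) x y = 1 := by omega
    rw [hd] at hmem
    exact hmem
  · exact path3
  · exact path4
  · exact path5
end

section
/- Assume the Setup. If there exists some j ∈ {1, …, n−2} such that 𝐇_j contains a rainbow Hamiltonian cycle (a rainbow cycle through all n−3 vertices of V ∖ {x, y, z}), then for every integer k with 4 ≤ k ≤ n−1 there exists a rainbow k-path joining x and y in 𝐆. -/
/-!
Write the rainbow Hamiltonian cycle of `𝐇_j` as `u 0, …, u (n-4)`; its colours are `n - 3` distinct
elements of `{1, …, n-2} \ {j}`. For `k = t + 3` it suffices to find a position `a` with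
`x ~ u a` in `G (n-1)` and `y ~ u (a+t)` in `G j`: then `x, u a, …, u (a+t), y` is a rainbow
path coloured `n-1`, then `t` cycle colours, then `j`. Such an `a` exists by pigeonhole over the
`n - 3` positions: at least `deg x - 1` positions `a` have `x ~ u a` (every neighbour of `x` other
than `y` lies on the cycle, as `x ≁ z`), at least `deg y - 2` have `y ~ u (a+t)`, and
`deg x + deg y ≥ n + 1`.
-/

set_option autoImplicit false

namespace IsRainbowPathOn

variable {V : Type*} {G : ℕ → SimpleGraph V} {D : Finset ℕ} {S : Set V} {k : ℕ} {x y : V}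

theorem mono {D' : Finset ℕ} {S' : Set V} (h : IsRainbowPathOn G D S k x y) (hD : D ⊆ D')
    (hS : S ⊆ S') : IsRainbowPathOn G D' S' k x y := by
  obtain ⟨u, c, hu, huinj, hc, hcinj, hk, hx, hy, hadj⟩ := h
  exact ⟨u, c, fun i hi => hS (hu i hi), huinj, fun i hi => hD (hc i hi), hcinj, hk, hx, hy, hadj⟩

theorem reverse (h : IsRainbowPathOn G D S k x y) : IsRainbowPathOn G D S k y x := by
  obtain ⟨u, c, hu, huinj, hc, hcinj, hk, hx, hy, hadj⟩ := h
  refine ⟨fun i => u (k - 1 - i), fun i => c (k - 2 - i), fun i hi => hu _ (by omega),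
    fun i j hi hj h => ?_, fun i hi => hc _ (by omega), fun i j hi hj h => ?_, hk,
    by simpa using hy, by simpa [Nat.sub_sub_self hk] using hx, fun i hi => ?_⟩
  · have := huinj _ _ (by omega) (by omega) h
    omega
  · have := hcinj _ _ (by omega) (by omega) h
    omega
  · have hsucc : k - 1 - i = k - 2 - i + 1 := by omega
    have hpred : k - 1 - (i + 1) = k - 2 - i := by omega
    simp only [hsucc, hpred]
    exact (hadj _ (by omega)).symm

theorem cons {w : V} {c₀ : ℕ} (h : IsRainbowPathOn G D S k x y) (hw : w ∉ S) (hc₀ : c₀ ∉ D)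
    (hadj : (G c₀).Adj w x) : IsRainbowPathOn G (insert c₀ D) (insert w S) (k + 1) w y := by
  obtain ⟨u, c, hu, huinj, hc, hcinj, hk, rfl, rfl, hadj'⟩ := h
  refine ⟨fun | 0 => w | i + 1 => u i, fun | 0 => c₀ | i + 1 => c i,
    fun i hi => ?_, fun i j hi hj h => ?_, fun i hi => ?_, fun i j hi hj h => ?_, by omega, rfl,
    ?_, fun i hi => ?_⟩
  · cases i with
    | zero => exact Set.mem_insert w S
    | succ i => exact Set.mem_insert_of_mem w (hu i (by omega))
  · cases i <;> cases j
    all_goals simp only at h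
    · rfl
    · exact absurd (h ▸ hu _ (by omega)) hw
    · exact absurd (h ▸ hu _ (by omega)) hw
    · rw [huinj _ _ (by omega) (by omega) h]
  · cases i with
    | zero => exact Finset.mem_insert_self c₀ D
    | succ i => exact Finset.mem_insert_of_mem (hc i (by omega))
  · cases i <;> cases j
    all_goals simp only at h
    · rfl
    · exact absurd (h ▸ hc _ (by omega)) hc₀
    · exact absurd (h ▸ hc _ (by omega)) hc₀
    · rw [hcinj _ _ (by omega) (by omega) h]
  · obtain ⟨k, rfl⟩ := Nat.exists_eq_add_of_lt hk
    rfl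
  · cases i with
    | zero => exact hadj
    | succ i => exact hadj' i (by omega)

end IsRainbowPathOn

section CycleArc

variable {V : Type*}

theorem isRainbowPathOn_of_cycle_arc {G : ℕ → SimpleGraph V} {D : Finset ℕ} {S : Set V}
    {l : ℕ} {u : ℕ → V} {c : ℕ → ℕ} (hu : ∀ i < l, u i ∈ S)
    (huinj : ∀ i j, i < l → j < l → u i = u j → i = j) (hc : ∀ i < l, c i ∈ D)
    (hcinj : ∀ i j, i < l → j < l → c i = c j → i = j)
    (hadj : ∀ i < l, (G (c i)).Adj (u i) (u ((i + 1) % l))) (a : ℕ) {t : ℕ} (ht : t < l) :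
    IsRainbowPathOn G D S (t + 1) (u (a % l)) (u ((a + t) % l)) := by
  have hl : 0 < l := by omega
  have hshift_inj : ∀ i j, i < l → j < l → (a + i) % l = (a + j) % l → i = j := by
    intro i j hi hj h
    have := Nat.ModEq.add_left_cancel' a h
    rwa [Nat.ModEq, Nat.mod_eq_of_lt hi, Nat.mod_eq_of_lt hj] at this
  have hmod (i : ℕ) : (a + i) % l < l := Nat.mod_lt _ hl
  refine ⟨fun i => u ((a + i) % l), fun i => c ((a + i) % l), fun i _ => hu _ (hmod i),
    fun i j hi hj h => hshift_inj i j (by omega) (by omega) (huinj _ _ (hmod i) (hmod j) h),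
    fun i _ => hc _ (hmod i),
    fun i j hi hj h => hshift_inj i j (by omega) (by omega) (hcinj _ _ (hmod i) (hmod j) h),
    by omega, rfl, rfl, fun i _ => ?_⟩
  have := hadj _ (hmod i)
  rwa [Nat.mod_add_mod] at this

theorem subset_image_rotate {S : Set V} {u : ℕ → V} {l t : ℕ} (hS : S ⊆ u '' Set.Iio l)
    (ht : t ≤ l) : S ⊆ (fun b => u ((b + t) % l)) '' Set.Iio l := by
  rintro _ hv
  obtain ⟨i, hi : i < l, rfl⟩ := hS hv
  refine ⟨(i + (l - t)) % l, Nat.mod_lt _ (by omega), ?_⟩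
  simp only [Nat.mod_add_mod, add_assoc, Nat.sub_add_cancel ht, Nat.add_mod_right,
    Nat.mod_eq_of_lt hi]

theorem ncard_neighborSet_le (H : SimpleGraph V) (w : V) {S : Set V} {u : ℕ → V} {l : ℕ}
    (hS : S ⊆ u '' Set.Iio l) :
    (H.neighborSet w).ncard ≤ {b | b < l ∧ H.Adj w (u b)}.ncard + (H.neighborSet w \ S).ncard := by
  rcases (H.neighborSet w).finite_or_infinite with hN | hN
  · have hfin : {b | b < l ∧ H.Adj w (u b)}.Finite := (Set.finite_Iio l).subset fun _ hb => hb.1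
    rw [← Set.ncard_inter_add_ncard_sdiff_eq_ncard _ S hN]
    gcongr
    calc (H.neighborSet w ∩ S).ncard ≤ (u '' {b | b < l ∧ H.Adj w (u b)}).ncard := by
          refine Set.ncard_le_ncard ?_ (hfin.image u)
          rintro v ⟨hwv, hv⟩
          obtain ⟨b, hb, rfl⟩ := hS hv
          exact ⟨b, ⟨hb, hwv⟩, rfl⟩
      _ ≤ _ := Set.ncard_image_le hfin
  · simp [hN.ncard]

theorem exists_lt_of_lt_ncard_add_ncard {l : ℕ} {P Q : ℕ → Prop}
    (h : l < {b | b < l ∧ P b}.ncard + {b | b < l ∧ Q b}.ncard) : ∃ b < l, P b ∧ Q b := by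
  by_contra! hPQ
  have hdisj : Disjoint {b | b < l ∧ P b} {b | b < l ∧ Q b} :=
    Set.disjoint_left.2 fun b hb hb' => hPQ b hb.1 hb.2 hb'.2
  have hunion := Set.ncard_union_eq hdisj ((Set.finite_Iio l).subset fun _ hb => hb.1)
    ((Set.finite_Iio l).subset fun _ hb => hb.1)
  have hle : ({b | b < l ∧ P b} ∪ {b | b < l ∧ Q b}).ncard ≤ (Set.Iio l).ncard :=
    Set.ncard_le_ncard (Set.union_subset (fun _ hb => hb.1) fun _ hb => hb.1) (Set.finite_Iio l)
  rw [Set.ncard_Iio_nat] at hle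
  omega

theorem exists_adj_adj_of_lt_ncard {S : Set V} {u : ℕ → V} {l : ℕ} (hS : S ⊆ u '' Set.Iio l)
    {t : ℕ} (ht : t ≤ l) (H₁ H₂ : SimpleGraph V) (x y : V)
    (h : l + (H₁.neighborSet x \ S).ncard + (H₂.neighborSet y \ S).ncard <
      (H₁.neighborSet x).ncard + (H₂.neighborSet y).ncard) :
    ∃ a < l, H₁.Adj x (u a) ∧ H₂.Adj y (u ((a + t) % l)) := by
  have hx := ncard_neighborSet_le H₁ x hS
  have hy := ncard_neighborSet_le H₂ y (subset_image_rotate hS ht)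
  exact exists_lt_of_lt_ncard_add_ncard (by omega)

theorem exists_adj_adj_of_compl_triple {x y z : V} {u : ℕ → V} {l t : ℕ}
    (hS : ({x, y, z} : Set V)ᶜ ⊆ u '' Set.Iio l) (ht : t ≤ l) {H₁ H₂ : SimpleGraph V}
    (hxz : ¬ H₁.Adj x z) (hdeg : l + 3 < (H₁.neighborSet x).ncard + (H₂.neighborSet y).ncard) :
    ∃ a < l, H₁.Adj x (u a) ∧ H₂.Adj y (u ((a + t) % l)) := by
  have hxS : H₁.neighborSet x \ ({x, y, z} : Set V)ᶜ ⊆ {y} := by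
    rintro v ⟨hxv, hv⟩
    simp only [Set.mem_compl_iff, not_not, Set.mem_insert_iff, Set.mem_singleton_iff] at hv
    rcases hv with rfl | rfl | rfl
    · exact (H₁.irrefl hxv).elim
    · rfl
    · exact absurd hxv hxz
  have hyS : H₂.neighborSet y \ ({x, y, z} : Set V)ᶜ ⊆ {x, z} := by
    rintro v ⟨hyv, hv⟩
    simp only [Set.mem_compl_iff, not_not, Set.mem_insert_iff, Set.mem_singleton_iff] at hv ⊢
    rcases hv with rfl | rfl | rfl
    · exact .inl rfl
    · exact (H₂.irrefl hyv).elim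
    · exact .inr rfl
  have hEx := (Set.ncard_le_ncard hxS).trans (Set.ncard_singleton y).le
  have hEy := (Set.ncard_le_ncard hyS).trans (Set.ncard_insert_le x {z})
  rw [Set.ncard_singleton] at hEy
  exact exists_adj_adj_of_lt_ncard hS ht H₁ H₂ x y (by omega)

end CycleArc

theorem statement3_general {V : Type*} (n : ℕ)
    (G : ℕ → SimpleGraph V)
    (hdeg : ∀ i ∈ Finset.Icc 1 (n - 1), ∀ v : V,
      n + 1 ≤ 2 * ((G i).neighborSet v).ncard)
    (x y z : V) (hxy : x ≠ y)
    (hxz : ¬ (G (n - 1)).Adj x z)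
    (hham : ∃ j ∈ Finset.Icc 1 (n - 2),
      HasRainbowHamCycleOn G (Finset.Icc 1 (n - 2) \ {j})
        (({x, y, z} : Set V)ᶜ) (n - 3)) :
    ∀ k : ℕ, 4 ≤ k → k ≤ n - 1 →
      IsRainbowPathOn G (Finset.Icc 1 (n - 1)) Set.univ k x y := by
  intro k hk4 hkn
  obtain ⟨t, rfl⟩ : ∃ t, k = t + 3 := ⟨k - 3, by omega⟩
  obtain ⟨j, hj, u, c, huinj, hS, hc, hcinj, -, hadj⟩ := hham
  rw [Finset.mem_Icc] at hj
  have hdx := hdeg (n - 1) (by simp only [Finset.mem_Icc]; omega) x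
  have hdy := hdeg j (by simp only [Finset.mem_Icc]; omega) y
  obtain ⟨a, ha, hxa, hya⟩ := exists_adj_adj_of_compl_triple (fun v hv => (hS v).1 hv) (t := t)
    (by omega) (H₂ := G j) hxz (by omega)
  have harc := isRainbowPathOn_of_cycle_arc (fun i hi => (hS _).2 ⟨i, hi, rfl⟩) huinj hc hcinj
    hadj a (t := t) (by omega)
  rw [Nat.mod_eq_of_lt ha] at harc
  refine ((((harc.cons ?_ ?_ hxa).reverse.cons ?_ ?_ hya).reverse).mono ?_ (Set.subset_univ _))
  · simp
  · simp only [Finset.mem_sdiff, Finset.mem_Icc]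
    omega
  · simp [hxy.symm]
  · simp only [Finset.mem_insert, Finset.mem_sdiff, Finset.mem_singleton, not_true_eq_false,
      and_false, or_false]
    omega
  · intro i
    simp only [Finset.mem_insert, Finset.mem_sdiff, Finset.mem_Icc, Finset.mem_singleton]
    omega

/-- Lemma: Hamiltonian cycle in some `𝐇_j`. Under the Setup, if
for some `j ∈ {1,…,n-2}` the collection `𝐇_j` (graphs `H i = G i - {x,y,z}` for
`i ∈ {1,…,n-2} \ {j}`) contains a rainbow Hamiltonian cycle on the `n-3` vertices
of `V \ {x,y,z}`, then for every `k` with `4 ≤ k ≤ n-1` there is a rainbow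
`k`-path joining `x` and `y` in `𝐆`. -/
theorem statement3 {V : Type*} [Fintype V] (n : ℕ) (hn : 7 ≤ n) (hodd : Odd n)
    (hV : Fintype.card V = n) (G : ℕ → SimpleGraph V)
    (hdeg : ∀ i ∈ Finset.Icc 1 (n - 1), ∀ v : V,
      n + 1 ≤ 2 * ((G i).neighborSet v).ncard)
    (x y z : V) (hxy : x ≠ y) (hzx : z ≠ x) (hzy : z ≠ y)
    (hxz : ¬ (G (n - 1)).Adj x z)
    (hham : ∃ j ∈ Finset.Icc 1 (n - 2),
      HasRainbowHamCycleOn G (Finset.Icc 1 (n - 2) \ {j})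
        (({x, y, z} : Set V)ᶜ) (n - 3)) :
    ∀ k : ℕ, 4 ≤ k → k ≤ n - 1 →
      IsRainbowPathOn G (Finset.Icc 1 (n - 1)) Set.univ k x y :=
  statement3_general n G hdeg x y z hxy hxz hham
end

section
/- Assume the Setup, and assume that 𝐇_j contains no rainbow Hamiltonian cycle for every j ∈ {1, …, n−2}. If 𝐇_j contains a rainbow (n−4)-cycle for some j ∈ {1, …, n−2}, then for every integer k with 4 ≤ k ≤ n−1 there exists a rainbow k-path joining x and y in 𝐆. -/
set_option autoImplicit false

set_option maxHeartbeats 1000000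
set_option linter.unusedSectionVars false
set_option maxHeartbeats 1000000
set_option linter.unusedSectionVars false

section Helpers

variable {L d : ℕ} [NeZero L]

lemma castinj {m m' : ℕ} (hm : m < L) (hm' : m' < L)
    (h : ((m : ℕ) : ZMod L) = ((m' : ℕ) : ZMod L)) : m = m' := by
  have := congrArg ZMod.val h
  rwa [ZMod.val_natCast_of_lt hm, ZMod.val_natCast_of_lt hm'] at this

lemma castne {m : ℕ} (h0 : 0 < m) (hm : m < L) : ((m : ℕ) : ZMod L) ≠ 0 := by
  intro h
  have := congrArg ZMod.val h
  rw [ZMod.val_natCast_of_lt hm, ZMod.val_zero] at this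
  omega

/-- invariance under +2 on ZMod of odd order forces univ -/
lemma inv2 (hLd : L = 2 * d + 1) (S : Finset (ZMod L))
    (h2 : S.image (· + (2 : ZMod L)) = S) (hne : S.Nonempty) : S = Finset.univ := by
  have hstep : ∀ b ∈ S, b + 2 ∈ S := by
    intro b hb; rw [← h2]; exact Finset.mem_image_of_mem _ hb
  have hiter : ∀ m : ℕ, ∀ b ∈ S, b + 2 * (m : ZMod L) ∈ S := by
    intro m
    induction m with
    | zero => intro b hb; simpa using hb
    | succ m ih =>
      intro b hb
      have := hstep _ (ih b hb)
      have he : b + 2 * ((m+1 : ℕ) : ZMod L) = b + 2 * (m : ZMod L) + 2 := by push_cast; ring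
      rwa [he]
  obtain ⟨a0, ha0⟩ := hne
  apply Finset.eq_univ_of_forall
  intro b
  have h21 : (2 : ZMod L) * ((d : ZMod L) + 1) = 1 := by
    have e1 : (((2*(d+1)) : ℕ) : ZMod L) = ((L+1 : ℕ) : ZMod L) := by
      congr 1; omega
    have e2 : ((L+1 : ℕ) : ZMod L) = 1 := by push_cast [ZMod.natCast_self]; ring
    rw [e2] at e1; push_cast at e1; linear_combination e1
  have hv : (((b - a0).val : ℕ) : ZMod L) = b - a0 := ZMod.natCast_rightInverse _
  have key : (2 : ZMod L) * (((d+1) * (b - a0).val : ℕ) : ZMod L) = b - a0 := by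
    push_cast [hv]
    linear_combination (b - a0) * h21
  have := hiter ((d+1) * (b - a0).val) a0 ha0
  rw [key] at this
  simpa using this

/-- failure of both directions gives the two image equations -/
lemma lemA (hLd : L = 2 * d + 1) (X S : Finset (ZMod L)) (t : ZMod L)
    (hX : d + 1 ≤ X.card) (hS : d ≤ S.card)
    (hfail : ∀ p ∈ X, p + t ∉ S ∧ p - t ∉ S) :
    S.image (· + t) = Finset.univ \ X ∧ S.image (· - t) = Finset.univ \ X := by
  have hXc : (Finset.univ \ X).card ≤ d := by
    have h1 : (Finset.univ \ X).card = Fintype.card (ZMod L) - X.card := by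
      rw [Finset.card_sdiff_of_subset (Finset.subset_univ X), Finset.card_univ]
    rw [h1, ZMod.card]; omega
  have hsub1 : S.image (· + t) ⊆ Finset.univ \ X := by
    intro q hq
    simp only [Finset.mem_image] at hq
    obtain ⟨p', hp', rfl⟩ := hq
    simp only [Finset.mem_sdiff, Finset.mem_univ, true_and]
    intro hqX
    exact (hfail _ hqX).2 (by simpa using hp')
  have hsub2 : S.image (· - t) ⊆ Finset.univ \ X := by
    intro q hq
    simp only [Finset.mem_image] at hq
    obtain ⟨p', hp', rfl⟩ := hq
    simp only [Finset.mem_sdiff, Finset.mem_univ, true_and]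
    intro hqX
    exact (hfail _ hqX).1 (by simpa using hp')
  have hc1 : (S.image (· + t)).card = S.card := Finset.card_image_of_injective _ (add_left_injective t)
  have hc2 : (S.image (· - t)).card = S.card := by
    have he : (· - t) = (· + (-t)) := by funext a; ring
    rw [he]
    exact Finset.card_image_of_injective _ (add_left_injective (-t))
  constructor
  · exact Finset.eq_of_subset_of_card_le hsub1 (by omega)
  · exact Finset.eq_of_subset_of_card_le hsub2 (by omega)

/-- cancel images -/
lemma imgCancel (S T : Finset (ZMod L)) (r t : ZMod L)
    (h : S.image (· + (t + r)) = T.image (· + r)) : S.image (· + t) = T := by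
  have h2 : (S.image (· + t)).image (· + r) = T.image (· + r) := by
    rw [Finset.image_image, ← h]
    congr 1
    funext a; simp [add_assoc]
  exact Finset.image_injective (add_left_injective r) h2

/-- from S+t = S-t derive S+2t = S -/
lemma eqShift (S : Finset (ZMod L)) (t : ZMod L)
    (h3 : S.image (· + t) = S.image (· - t)) :
    S.image (· + (2*t)) = S := by
  have e1 : S.image (· + (2*t)) = (S.image (· + t)).image (· + t) := by
    rw [Finset.image_image]
    congr 1
    funext a; simp; ring
  rw [e1, h3, Finset.image_image]
  have e2 : ((· + t) ∘ (· - t)) = (id : ZMod L → ZMod L) := by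
    funext a; simp
  rw [e2, Finset.image_id]

end Helpers

section Helpers2
variable {L d : ℕ} [NeZero L]

lemma univ_image_add (t : ZMod L) : (Finset.univ : Finset (ZMod L)).image (· + t) = Finset.univ := by
  apply Finset.eq_univ_of_forall
  intro b
  exact Finset.mem_image.2 ⟨b - t, Finset.mem_univ _, by ring⟩

lemma neg2_to_pos2 (S : Finset (ZMod L)) (h : S.image (· + (-2 : ZMod L)) = S) :
    S.image (· + (2 : ZMod L)) = S := by
  have h2 := congrArg (Finset.image (· + (2 : ZMod L))) h
  rw [Finset.image_image] at h2
  have e : ((· + (2:ZMod L)) ∘ (· + (-2:ZMod L))) = (id : ZMod L → ZMod L) := by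
    funext a; simp
  rw [e, Finset.image_id] at h2
  exact h2.symm

lemma goodPair (hLd : L = 2 * d + 1) (hd : 1 ≤ d) (X S : Finset (ZMod L)) (tz : ZMod L)
    (hX : d + 1 ≤ X.card) (hS : d ≤ S.card) (htz : tz = 1 ∨ tz = -1) :
    ∃ p ∈ X, p + tz ∈ S ∨ p - tz ∈ S := by
  by_contra hcon
  push_neg at hcon
  obtain ⟨h1, h2⟩ := lemA hLd X S tz hX hS hcon
  have hshift := eqShift S tz (h1.trans h2.symm)
  have hS2 : S.image (· + (2:ZMod L)) = S := by
    rcases htz with rfl | rfl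
    · simpa using hshift
    · apply neg2_to_pos2
      have e : (2 : ZMod L) * (-1) = -2 := by ring
      rwa [e] at hshift
  have hSuniv : S = Finset.univ := inv2 hLd S hS2 (Finset.card_pos.1 (by omega))
  rw [hSuniv, univ_image_add] at h1
  have hcard := congrArg Finset.card h1
  rw [Finset.card_univ, ZMod.card, Finset.card_sdiff_of_subset (Finset.subset_univ X),
    Finset.card_univ, ZMod.card] at hcard
  omega

lemma goodPair2 (hLd : L = 2 * d + 1) (hd : 1 ≤ d) (X S S' : Finset (ZMod L)) (tz : ZMod L)
    (hX : d + 1 ≤ X.card) (hS : d ≤ S.card) (hS' : d ≤ S'.card) :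
    (∃ p ∈ X, p + tz ∈ S ∨ p - tz ∈ S) ∨
    (∃ p ∈ X, p + (tz - 1) ∈ S' ∨ p - (tz - 1) ∈ S') := by
  by_contra hcon
  push_neg at hcon
  obtain ⟨hc1, hc2⟩ := hcon
  obtain ⟨h1, h2⟩ := lemA hLd X S tz hX hS hc1
  obtain ⟨h1', h2'⟩ := lemA hLd X S' (tz - 1) hX hS' hc2
  have e1 : S.image (· + 1) = S' := by
    apply imgCancel S S' (tz - 1) 1
    rw [h1']
    have e : 1 + (tz - 1) = tz := by ring
    rw [e, h1]
  have e2 : S.image (· + (-1)) = S' := by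
    apply imgCancel S S' (-(tz - 1)) (-1)
    have ea : (· - (tz-1)) = (· + (-(tz-1))) := by funext a; ring
    rw [← ea, h2']
    have eb : (fun x => x + (-1 + -(tz - 1))) = (· - tz) := by funext a; ring
    rw [eb, h2]
  have e3 : S.image (· + 1) = S.image (· - 1) := by
    rw [e1, ← e2]
    congr 1
    funext a; ring
  have hshift := eqShift S 1 e3
  have hS2 : S.image (· + (2:ZMod L)) = S := by simpa using hshift
  have hSuniv : S = Finset.univ := inv2 hLd S hS2 (Finset.card_pos.1 (by omega))
  rw [hSuniv, univ_image_add] at h1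
  have hcard := congrArg Finset.card h1
  rw [Finset.card_univ, ZMod.card, Finset.card_sdiff_of_subset (Finset.subset_univ X),
    Finset.card_univ, ZMod.card] at hcard
  omega

lemma Wbound (hLd : L = 2 * d + 1) (hd : 1 ≤ d) (Wj Ws : Finset (ZMod L))
    (hWs : d ≤ Ws.card)
    (hnoc : ∀ a : ZMod L, ¬(a ∈ Wj ∧ a + 1 ∈ Ws))
    (hnoc' : ∀ a : ZMod L, ¬(a ∈ Ws ∧ a + 1 ∈ Wj)) : Wj.card ≤ d := by
  by_contra hbig
  push_neg at hbig
  have hfail : ∀ p ∈ Wj, p + 1 ∉ Ws ∧ p - 1 ∉ Ws := by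
    intro p hp
    constructor
    · intro hmem; exact hnoc p ⟨hp, hmem⟩
    · intro hmem
      apply hnoc' (p - 1)
      refine ⟨hmem, ?_⟩
      have e : p - 1 + 1 = p := by ring
      rwa [e]
  obtain ⟨h1, h2⟩ := lemA hLd Wj Ws 1 (by omega) hWs hfail
  have hshift := eqShift Ws 1 (h1.trans h2.symm)
  have hS2 : Ws.image (· + (2:ZMod L)) = Ws := by simpa using hshift
  have hSuniv : Ws = Finset.univ := inv2 hLd Ws hS2 (Finset.card_pos.1 (by omega))
  rw [hSuniv, univ_image_add] at h1
  have hcard := congrArg Finset.card h1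
  rw [Finset.card_univ, ZMod.card, Finset.card_sdiff_of_subset (Finset.subset_univ Wj),
    Finset.card_univ, ZMod.card] at hcard
  omega

end Helpers2

/-- Degree counting: neighbors are covered by cycle positions plus exceptional set. -/
lemma coverCount {V : Type*} [Fintype V] {L : ℕ} [NeZero L] (H : SimpleGraph V) (v : V)
    (uu : ZMod L → V) (T : Finset V) (P : Finset (ZMod L))
    (hPmem : ∀ b : ZMod L, H.Adj v (uu b) → b ∈ P)
    (hcov : ∀ v'' : V, H.Adj v v'' → v'' ∈ T ∨ ∃ b, uu b = v'') :
    (H.neighborSet v).ncard ≤ P.card + T.card := by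
  classical
  have hsub : H.neighborSet v ⊆ ↑(P.image uu ∪ T) := by
    intro v'' hv''
    have hadj : H.Adj v v'' := hv''
    rcases hcov v'' hadj with hT | ⟨b, rfl⟩
    · simp [Finset.mem_union, hT]
    · have hb : b ∈ P := hPmem b hadj
      simp only [Finset.coe_union, Set.mem_union, Finset.mem_coe]
      exact Or.inl (Finset.mem_image_of_mem _ hb)
  have h1 : (H.neighborSet v).ncard ≤ (P.image uu ∪ T).card := by
    have h0 := Set.ncard_le_ncard hsub (P.image uu ∪ T).finite_toSet
    rwa [Set.ncard_coe_finset] at h0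
  calc (H.neighborSet v).ncard ≤ (P.image uu ∪ T).card := h1
    _ ≤ (P.image uu).card + T.card := Finset.card_union_le _ _
    _ ≤ P.card + T.card := by
        have := Finset.card_image_le (s := P) (f := uu)
        omega

/-- Build a rainbow `(t+3)`-path `x, u_p, …, u_{p+t}, y`. -/
lemma shapeP {V : Type*} (n L : ℕ) [NeZero L] (G : ℕ → SimpleGraph V)
    (x y : V) (j : ℕ) (hj1 : 1 ≤ j) (hj2 : j ≤ n - 2) (hn : 7 ≤ n)
    (uu : ZMod L → V) (cc : ZMod L → ℕ)
    (huinj : Function.Injective uu) (hcinj : Function.Injective cc)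
    (hadj : ∀ a, (G (cc a)).Adj (uu a) (uu (a + 1)))
    (hcmem1 : ∀ a, 1 ≤ cc a) (hcmem2 : ∀ a, cc a ≤ n - 2) (hcj : ∀ a, cc a ≠ j)
    (hux : ∀ a, uu a ≠ x) (huy : ∀ a, uu a ≠ y) (hxy : x ≠ y)
    (t : ℕ) (ht1 : 1 ≤ t) (htL : t + 1 ≤ L)
    (p : ZMod L) (hxp : (G (n - 1)).Adj x (uu p))
    (hyq : (G j).Adj y (uu (p + (t : ZMod L)))) :
    IsRainbowPathOn G (Finset.Icc 1 (n - 1)) Set.univ (t + 3) x y := by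
  refine ⟨fun i => if i = 0 then x else if i ≤ t + 1 then uu (p + ((i - 1 : ℕ) : ZMod L)) else y,
    fun i => if i = 0 then n - 1 else if i ≤ t then cc (p + ((i - 1 : ℕ) : ZMod L)) else j,
    ?_, ?_, ?_, ?_, ?_, ?_, ?_, ?_⟩
  · intro i _; trivial
  · -- injectivity of vertices
    intro i i' hi hi' heq
    beta_reduce at heq
    by_cases h0 : i = 0 <;> by_cases h0' : i' = 0
    · omega
    · exfalso; rw [if_pos h0, if_neg h0'] at heq
      by_cases hm : i' ≤ t + 1
      · rw [if_pos hm] at heq; exact hux _ heq.symm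
      · rw [if_neg hm] at heq; exact hxy heq
    · exfalso; rw [if_pos h0', if_neg h0] at heq
      by_cases hm : i ≤ t + 1
      · rw [if_pos hm] at heq; exact hux _ heq
      · rw [if_neg hm] at heq; exact hxy heq.symm
    · rw [if_neg h0, if_neg h0'] at heq
      by_cases hm : i ≤ t + 1 <;> by_cases hm' : i' ≤ t + 1
      · rw [if_pos hm, if_pos hm'] at heq
        have h1 := huinj heq
        have h2 := add_left_cancel h1
        have h3 : i - 1 = i' - 1 := castinj (by omega) (by omega) h2
        omega
      · exfalso; rw [if_pos hm, if_neg hm'] at heq; exact huy _ heq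
      · exfalso; rw [if_neg hm, if_pos hm'] at heq; exact huy _ heq.symm
      · omega
  · -- colors in range
    intro i hi
    beta_reduce
    by_cases h0 : i = 0
    · rw [if_pos h0]
      exact Finset.mem_Icc.2 ⟨by omega, le_rfl⟩
    · rw [if_neg h0]
      by_cases hm : i ≤ t
      · rw [if_pos hm]
        exact Finset.mem_Icc.2 ⟨hcmem1 _, by have := hcmem2 (p + ((i - 1 : ℕ) : ZMod L)); omega⟩
      · rw [if_neg hm]
        exact Finset.mem_Icc.2 ⟨hj1, by omega⟩
  · -- injectivity of colors
    intro i i' hi hi' heq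
    beta_reduce at heq
    by_cases h0 : i = 0 <;> by_cases h0' : i' = 0
    · omega
    · exfalso; rw [if_pos h0, if_neg h0'] at heq
      by_cases hm : i' ≤ t
      · rw [if_pos hm] at heq
        have := hcmem2 (p + ((i' - 1 : ℕ) : ZMod L)); omega
      · rw [if_neg hm] at heq; omega
    · exfalso; rw [if_pos h0', if_neg h0] at heq
      by_cases hm : i ≤ t
      · rw [if_pos hm] at heq
        have := hcmem2 (p + ((i - 1 : ℕ) : ZMod L)); omega
      · rw [if_neg hm] at heq; omega
    · rw [if_neg h0, if_neg h0'] at heq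
      by_cases hm : i ≤ t <;> by_cases hm' : i' ≤ t
      · rw [if_pos hm, if_pos hm'] at heq
        have h1 := hcinj heq
        have h2 := add_left_cancel h1
        have h3 : i - 1 = i' - 1 := castinj (by omega) (by omega) h2
        omega
      · exfalso; rw [if_pos hm, if_neg hm'] at heq; exact hcj _ heq
      · exfalso; rw [if_neg hm, if_pos hm'] at heq; exact hcj _ heq.symm
      · omega
  · omega
  · beta_reduce; rw [if_pos rfl]
  · beta_reduce
    have h1 : t + 3 - 1 = t + 2 := by omega
    rw [h1, if_neg (by omega : ¬ (t + 2 = 0)), if_neg (by omega : ¬ (t + 2 ≤ t + 1))]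
  · -- adjacency
    intro i hi
    beta_reduce
    by_cases h0 : i = 0
    · subst h0
      rw [if_pos rfl, if_neg (by omega : ¬ (0 + 1 = 0)), if_pos (by omega : 0 + 1 ≤ t + 1),
        if_pos rfl]
      have e : ((0 + 1 - 1 : ℕ) : ZMod L) = 0 := by norm_num
      rw [e, add_zero]
      exact hxp
    · by_cases hm : i ≤ t
      · rw [if_neg h0, if_pos hm, if_neg h0, if_pos (by omega : i ≤ t + 1),
          if_neg (by omega : ¬ (i + 1 = 0)), if_pos (by omega : i + 1 ≤ t + 1)]
        have e1 : ((i + 1 - 1 : ℕ) : ZMod L) = ((i - 1 : ℕ) : ZMod L) + 1 := by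
          have e0 : i + 1 - 1 = (i - 1) + 1 := by omega
          rw [e0]; push_cast; ring
        rw [e1, ← add_assoc]
        exact hadj _
      · have hieq : i = t + 1 := by omega
        subst hieq
        rw [if_neg h0, if_neg (by omega : ¬ (t + 1 ≤ t)), if_neg h0,
          if_pos (le_refl (t + 1)), if_neg (by omega : ¬ (t + 1 + 1 = 0)),
          if_neg (by omega : ¬ (t + 1 + 1 ≤ t + 1))]
        have e : ((t + 1 - 1 : ℕ) : ZMod L) = (t : ZMod L) := by norm_num
        rw [e]
        exact hyq.symm

/-- Build a rainbow `(t+4)`-path `x, u_p, …, u_{p+t}, w, y`. -/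
lemma shapeW {V : Type*} (n L : ℕ) [NeZero L] (G : ℕ → SimpleGraph V)
    (x y w : V) (β γ : ℕ) (hβ1 : 1 ≤ β) (hβ2 : β ≤ n - 2)
    (hγ1 : 1 ≤ γ) (hγ2 : γ ≤ n - 2) (hβγ : β ≠ γ) (hn : 7 ≤ n)
    (uu : ZMod L → V) (cc : ZMod L → ℕ)
    (huinj : Function.Injective uu) (hcinj : Function.Injective cc)
    (hadj : ∀ a, (G (cc a)).Adj (uu a) (uu (a + 1)))
    (hcmem1 : ∀ a, 1 ≤ cc a) (hcmem2 : ∀ a, cc a ≤ n - 2)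
    (hcβ : ∀ a, cc a ≠ β) (hcγ : ∀ a, cc a ≠ γ)
    (hux : ∀ a, uu a ≠ x) (huy : ∀ a, uu a ≠ y) (huw : ∀ a, uu a ≠ w)
    (hxy : x ≠ y) (hwx : w ≠ x) (hwy : w ≠ y)
    (t : ℕ) (ht1 : 1 ≤ t) (htL : t + 1 ≤ L)
    (p : ZMod L) (hxp : (G (n - 1)).Adj x (uu p))
    (hwq : (G β).Adj w (uu (p + (t : ZMod L)))) (hwy' : (G γ).Adj w y) :
    IsRainbowPathOn G (Finset.Icc 1 (n - 1)) Set.univ (t + 4) x y := by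
  refine ⟨fun i => if i = 0 then x else if i ≤ t + 1 then uu (p + ((i - 1 : ℕ) : ZMod L))
      else if i = t + 2 then w else y,
    fun i => if i = 0 then n - 1 else if i ≤ t then cc (p + ((i - 1 : ℕ) : ZMod L))
      else if i = t + 1 then β else γ,
    ?_, ?_, ?_, ?_, ?_, ?_, ?_, ?_⟩
  · intro i _; trivial
  · -- injectivity of vertices
    intro i i' hi hi' heq
    beta_reduce at heq
    have main : ∀ i1 i2 : ℕ, i1 < t + 4 → i2 < t + 4 →
        (if i1 = 0 then x else if i1 ≤ t + 1 then uu (p + ((i1 - 1 : ℕ) : ZMod L))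
          else if i1 = t + 2 then w else y) =
        (if i2 = 0 then x else if i2 ≤ t + 1 then uu (p + ((i2 - 1 : ℕ) : ZMod L))
          else if i2 = t + 2 then w else y) → i1 ≤ i2 → i1 = i2 := by
      intro i1 i2 h1 h2 he hle
      by_cases h0 : i1 = 0 <;> by_cases h0' : i2 = 0
      · omega
      · exfalso; rw [if_pos h0, if_neg h0'] at he
        by_cases hm : i2 ≤ t + 1
        · rw [if_pos hm] at he; exact hux _ he.symm
        · by_cases hw2 : i2 = t + 2
          · rw [if_neg hm, if_pos hw2] at he; exact hwx he.symm
          · rw [if_neg hm, if_neg hw2] at he; exact hxy he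
      · omega
      · rw [if_neg h0, if_neg h0'] at he
        by_cases hm : i1 ≤ t + 1 <;> by_cases hm' : i2 ≤ t + 1
        · rw [if_pos hm, if_pos hm'] at he
          have h3 : i1 - 1 = i2 - 1 := castinj (by omega) (by omega) (add_left_cancel (huinj he))
          omega
        · exfalso
          rw [if_pos hm] at he
          by_cases hw2 : i2 = t + 2
          · rw [if_neg hm', if_pos hw2] at he; exact huw _ he
          · rw [if_neg hm', if_neg hw2] at he; exact huy _ he
        · omega
        · by_cases hw1 : i1 = t + 2 <;> by_cases hw2 : i2 = t + 2
          · omega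
          · exfalso; rw [if_neg hm, if_pos hw1, if_neg hm', if_neg hw2] at he; exact hwy he
          · exfalso; rw [if_neg hm, if_neg hm', if_pos hw2] at he
            rw [if_neg hw1] at he; exact hwy he.symm
          · omega
    rcases le_total i i' with hle | hle
    · exact main i i' hi hi' heq hle
    · exact (main i' i hi' hi heq.symm hle).symm
  · -- colors in range
    intro i hi
    beta_reduce
    by_cases h0 : i = 0
    · rw [if_pos h0]; exact Finset.mem_Icc.2 ⟨by omega, le_rfl⟩
    · rw [if_neg h0]
      by_cases hm : i ≤ t
      · rw [if_pos hm]
        exact Finset.mem_Icc.2 ⟨hcmem1 _, by have := hcmem2 (p + ((i - 1 : ℕ) : ZMod L)); omega⟩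
      · by_cases hb : i = t + 1
        · rw [if_neg hm, if_pos hb]; exact Finset.mem_Icc.2 ⟨hβ1, by omega⟩
        · rw [if_neg hm, if_neg hb]; exact Finset.mem_Icc.2 ⟨hγ1, by omega⟩
  · -- injectivity of colors
    intro i i' hi hi' heq
    beta_reduce at heq
    have main : ∀ i1 i2 : ℕ, i1 + 1 < t + 4 → i2 + 1 < t + 4 →
        (if i1 = 0 then n - 1 else if i1 ≤ t then cc (p + ((i1 - 1 : ℕ) : ZMod L))
          else if i1 = t + 1 then β else γ) =
        (if i2 = 0 then n - 1 else if i2 ≤ t then cc (p + ((i2 - 1 : ℕ) : ZMod L))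
          else if i2 = t + 1 then β else γ) → i1 ≤ i2 → i1 = i2 := by
      intro i1 i2 h1 h2 he hle
      by_cases h0 : i1 = 0 <;> by_cases h0' : i2 = 0
      · omega
      · exfalso; rw [if_pos h0, if_neg h0'] at he
        by_cases hm : i2 ≤ t
        · rw [if_pos hm] at he
          have := hcmem2 (p + ((i2 - 1 : ℕ) : ZMod L)); omega
        · by_cases hb : i2 = t + 1
          · rw [if_neg hm, if_pos hb] at he; omega
          · rw [if_neg hm, if_neg hb] at he; omega
      · omega
      · rw [if_neg h0, if_neg h0'] at he
        by_cases hm : i1 ≤ t <;> by_cases hm' : i2 ≤ t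
        · rw [if_pos hm, if_pos hm'] at he
          have h3 : i1 - 1 = i2 - 1 := castinj (by omega) (by omega) (add_left_cancel (hcinj he))
          omega
        · exfalso
          rw [if_pos hm] at he
          by_cases hb : i2 = t + 1
          · rw [if_neg hm', if_pos hb] at he; exact hcβ _ he
          · rw [if_neg hm', if_neg hb] at he; exact hcγ _ he
        · omega
        · by_cases hb1 : i1 = t + 1 <;> by_cases hb2 : i2 = t + 1
          · omega
          · exfalso; rw [if_neg hm, if_pos hb1, if_neg hm', if_neg hb2] at he; exact hβγ he
          · exfalso; rw [if_neg hm, if_neg hb1, if_neg hm', if_pos hb2] at he; exact hβγ he.symm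
          · omega
    rcases le_total i i' with hle | hle
    · exact main i i' hi hi' heq hle
    · exact (main i' i hi' hi heq.symm hle).symm
  · omega
  · beta_reduce; rw [if_pos rfl]
  · beta_reduce
    have h1 : t + 4 - 1 = t + 3 := by omega
    rw [h1, if_neg (by omega : ¬ (t + 3 = 0)), if_neg (by omega : ¬ (t + 3 ≤ t + 1)),
      if_neg (by omega : ¬ (t + 3 = t + 2))]
  · -- adjacency
    intro i hi
    beta_reduce
    by_cases h0 : i = 0
    · subst h0
      rw [if_pos rfl, if_neg (by omega : ¬ (0 + 1 = 0)), if_pos (by omega : 0 + 1 ≤ t + 1),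
        if_pos rfl]
      have e : ((0 + 1 - 1 : ℕ) : ZMod L) = 0 := by norm_num
      rw [e, add_zero]
      exact hxp
    · by_cases hm : i ≤ t
      · rw [if_neg h0, if_pos hm, if_neg h0, if_pos (by omega : i ≤ t + 1),
          if_neg (by omega : ¬ (i + 1 = 0)), if_pos (by omega : i + 1 ≤ t + 1)]
        have e1 : ((i + 1 - 1 : ℕ) : ZMod L) = ((i - 1 : ℕ) : ZMod L) + 1 := by
          have e0 : i + 1 - 1 = (i - 1) + 1 := by omega
          rw [e0]; push_cast; ring
        rw [e1, ← add_assoc]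
        exact hadj _
      · by_cases hb : i = t + 1
        · subst hb
          rw [if_neg h0, if_neg (by omega : ¬ (t + 1 ≤ t)), if_pos rfl, if_neg h0,
            if_pos (le_refl (t + 1)), if_neg (by omega : ¬ (t + 1 + 1 = 0)),
            if_neg (by omega : ¬ (t + 1 + 1 ≤ t + 1)), if_pos (by omega : t + 1 + 1 = t + 2)]
          have e : ((t + 1 - 1 : ℕ) : ZMod L) = (t : ZMod L) := by norm_num
          rw [e]
          exact hwq.symm
        · have hieq : i = t + 2 := by omega
          subst hieq
          rw [if_neg h0, if_neg (by omega : ¬ (t + 2 ≤ t)), if_neg (by omega : ¬ (t + 2 = t + 1)),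
            if_neg h0, if_neg (by omega : ¬ (t + 2 ≤ t + 1)), if_pos rfl,
            if_neg (by omega : ¬ (t + 2 + 1 = 0)), if_neg (by omega : ¬ (t + 2 + 1 ≤ t + 1)),
            if_neg (by omega : ¬ (t + 2 + 1 = t + 2))]
          exact hwy'

/-- If `w` attaches to two consecutive cycle vertices in two fresh colors from
`Icc 1 (n-2)`, we get a rainbow Hamiltonian cycle, contradiction. -/
lemma hamContra {V : Type*} (n L : ℕ) [NeZero L] (G : ℕ → SimpleGraph V)
    (x y z w : V) (α β : ℕ) (hn : 7 ≤ n) (hL : L = n - 4)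
    (hnoham : ∀ j ∈ Finset.Icc 1 (n - 2),
      ¬ HasRainbowHamCycleOn G (Finset.Icc 1 (n - 2) \ {j})
        (({x, y, z} : Set V)ᶜ) (n - 3))
    (uu : ZMod L → V) (cc : ZMod L → ℕ)
    (huinj : Function.Injective uu) (hcinj : Function.Injective cc)
    (hadj : ∀ a, (G (cc a)).Adj (uu a) (uu (a + 1)))
    (hcmem1 : ∀ a, 1 ≤ cc a) (hcmem2 : ∀ a, cc a ≤ n - 2)
    (hα1 : 1 ≤ α) (hα2 : α ≤ n - 2) (hβ1 : 1 ≤ β) (hβ2 : β ≤ n - 2) (hαβ : α ≠ β)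
    (hcα : ∀ b, cc b ≠ α) (hcβ : ∀ b, cc b ≠ β)
    (hux : ∀ a, uu a ≠ x) (huy : ∀ a, uu a ≠ y) (huz : ∀ a, uu a ≠ z)
    (huw : ∀ a, uu a ≠ w)
    (hwx : w ≠ x) (hwy : w ≠ y) (hwz : w ≠ z)
    (hcover : ∀ v : V, v = x ∨ v = y ∨ v = z ∨ v = w ∨ ∃ b, uu b = v)
    (a : ZMod L) (hwa : (G α).Adj w (uu a)) (hwb : (G β).Adj w (uu (a + 1))) :
    False := by
  have hL3 : 3 ≤ L := by omega
  have hl : n - 3 = L + 1 := by omega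
  apply hnoham (cc a) (Finset.mem_Icc.2 ⟨hcmem1 a, hcmem2 a⟩)
  rw [hl]
  refine ⟨fun m => if m < L then uu (a + 1 + (m : ZMod L)) else w,
    fun m => if m < L - 1 then cc (a + 1 + (m : ZMod L)) else if m = L - 1 then α else β,
    ?_, ?_, ?_, ?_, ?_, ?_⟩
  · -- vertex injectivity
    intro i i' hi hi' heq
    beta_reduce at heq
    by_cases h1 : i < L <;> by_cases h2 : i' < L
    · rw [if_pos h1, if_pos h2] at heq
      have h3 := add_left_cancel (huinj heq)
      exact castinj h1 h2 h3
    · exfalso; rw [if_pos h1, if_neg h2] at heq; exact huw _ heq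
    · exfalso; rw [if_neg h1, if_pos h2] at heq; exact huw _ heq.symm
    · omega
  · -- vertex set characterization
    intro v
    constructor
    · intro hv
      have hv' : ¬ (v = x ∨ v = y ∨ v = z) := by
        simpa [Set.mem_compl_iff, Set.mem_insert_iff] using hv
      rcases hcover v with h | h | h | h | ⟨b, rfl⟩
      · exact absurd (Or.inl h) hv'
      · exact absurd (Or.inr (Or.inl h)) hv'
      · exact absurd (Or.inr (Or.inr h)) hv'
      · exact ⟨L, by omega, by beta_reduce; rw [if_neg (lt_irrefl L)]; exact h.symm⟩
      · refine ⟨(b - (a + 1)).val, by have := ZMod.val_lt (b - (a+1)); omega, ?_⟩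
        beta_reduce
        rw [if_pos (ZMod.val_lt _)]
        congr 1
        rw [ZMod.natCast_rightInverse]
        ring
    · rintro ⟨i, hi, rfl⟩
      beta_reduce
      by_cases h1 : i < L
      · rw [if_pos h1]
        simp only [Set.mem_compl_iff, Set.mem_insert_iff, Set.mem_singleton_iff]
        push_neg
        exact ⟨hux _, huy _, huz _⟩
      · rw [if_neg h1]
        simp only [Set.mem_compl_iff, Set.mem_insert_iff, Set.mem_singleton_iff]
        push_neg
        exact ⟨hwx, hwy, hwz⟩
  · -- colors in D
    intro i hi
    beta_reduce
    by_cases h1 : i < L - 1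
    · rw [if_pos h1]
      refine Finset.mem_sdiff.2 ⟨Finset.mem_Icc.2 ⟨hcmem1 _, hcmem2 _⟩, ?_⟩
      simp only [Finset.mem_singleton]
      intro he
      have h2 : a + 1 + ((i : ℕ) : ZMod L) = a := hcinj he
      have h3 : ((i + 1 : ℕ) : ZMod L) = ((0 : ℕ) : ZMod L) := by
        push_cast
        linear_combination h2
      have := castinj (by omega) (by omega) h3
      omega
    · by_cases h2 : i = L - 1
      · rw [if_neg h1, if_pos h2]
        exact Finset.mem_sdiff.2 ⟨Finset.mem_Icc.2 ⟨hα1, hα2⟩, by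
          simp only [Finset.mem_singleton]; exact fun he => hcα a he.symm⟩
      · rw [if_neg h1, if_neg h2]
        exact Finset.mem_sdiff.2 ⟨Finset.mem_Icc.2 ⟨hβ1, hβ2⟩, by
          simp only [Finset.mem_singleton]; exact fun he => hcβ a he.symm⟩
  · -- color injectivity
    intro i i' hi hi' heq
    beta_reduce at heq
    have main : ∀ i1 i2 : ℕ, i1 < L + 1 → i2 < L + 1 →
        (if i1 < L - 1 then cc (a + 1 + (i1 : ZMod L)) else if i1 = L - 1 then α else β) =
        (if i2 < L - 1 then cc (a + 1 + (i2 : ZMod L)) else if i2 = L - 1 then α else β) →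
        i1 ≤ i2 → i1 = i2 := by
      intro i1 i2 h1 h2 he hle
      by_cases hm : i1 < L - 1 <;> by_cases hm' : i2 < L - 1
      · rw [if_pos hm, if_pos hm'] at he
        exact castinj (by omega) (by omega) (add_left_cancel (hcinj he))
      · exfalso
        rw [if_pos hm] at he
        by_cases hb : i2 = L - 1
        · rw [if_neg hm', if_pos hb] at he; exact hcα _ he
        · rw [if_neg hm', if_neg hb] at he; exact hcβ _ he
      · omega
      · by_cases hb1 : i1 = L - 1 <;> by_cases hb2 : i2 = L - 1
        · omega
        · exfalso; rw [if_neg hm, if_pos hb1, if_neg hm', if_neg hb2] at he; exact hαβ he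
        · omega
        · omega
    rcases le_total i i' with hle | hle
    · exact main i i' hi hi' heq hle
    · exact (main i' i hi' hi heq.symm hle).symm
  · omega
  · -- adjacency
    intro i hi
    beta_reduce
    by_cases h1 : i < L - 1
    · rw [if_pos h1, if_pos (by omega : i < L)]
      have hmod : (i + 1) % (L + 1) = i + 1 := Nat.mod_eq_of_lt (by omega)
      rw [hmod, if_pos (by omega : i + 1 < L)]
      have e1 : ((i + 1 : ℕ) : ZMod L) = ((i : ℕ) : ZMod L) + 1 := by push_cast; ring
      rw [e1, ← add_assoc]
      exact hadj _
    · by_cases h2 : i = L - 1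
      · subst h2
        rw [if_neg h1, if_pos rfl, if_pos (by omega : L - 1 < L)]
        have hmod : (L - 1 + 1) % (L + 1) = L := by
          have : L - 1 + 1 = L := by omega
          rw [this]; exact Nat.mod_eq_of_lt (by omega)
        rw [hmod, if_neg (lt_irrefl L)]
        have e : a + 1 + ((L - 1 : ℕ) : ZMod L) = a := by
          have e2 : ((L - 1 : ℕ) : ZMod L) = ((L : ℕ) : ZMod L) - 1 := by
            have : L - 1 + 1 = L := by omega
            have e3 : (((L - 1) + 1 : ℕ) : ZMod L) = ((L : ℕ) : ZMod L) := by rw [this]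
            push_cast at e3
            linear_combination e3
          rw [e2, ZMod.natCast_self]
          ring
        rw [e]
        exact hwa.symm
      · have h3 : i = L := by omega
        rw [h3, if_neg (by omega : ¬ (L < L - 1)), if_neg (by omega : ¬ (L = L - 1)),
          if_neg (lt_irrefl L)]
        have hmod : (L + 1) % (L + 1) = 0 := Nat.mod_self _
        rw [hmod, if_pos (by omega : 0 < L)]
        have e : a + 1 + ((0 : ℕ) : ZMod L) = a + 1 := by norm_num
        rw [e]
        exact hwb

/-- Lemma: `(n-4)`-cycle in some `𝐇_j`. Under the Setup, if no
`𝐇_j` contains a rainbow Hamiltonian cycle but some `𝐇_j` contains a rainbow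
`(n-4)`-cycle, then for every `k` with `4 ≤ k ≤ n-1` there is a rainbow `k`-path
joining `x` and `y` in `𝐆`. -/
theorem statement4 {V : Type*} [Fintype V] (n : ℕ) (hn : 7 ≤ n) (hodd : Odd n)
    (hV : Fintype.card V = n) (G : ℕ → SimpleGraph V)
    (hdeg : ∀ i ∈ Finset.Icc 1 (n - 1), ∀ v : V,
      n + 1 ≤ 2 * ((G i).neighborSet v).ncard)
    (x y z : V) (hxy : x ≠ y) (hzx : z ≠ x) (hzy : z ≠ y)
    (hxz : ¬ (G (n - 1)).Adj x z)
    (hnoham : ∀ j ∈ Finset.Icc 1 (n - 2),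
      ¬ HasRainbowHamCycleOn G (Finset.Icc 1 (n - 2) \ {j})
        (({x, y, z} : Set V)ᶜ) (n - 3))
    (hcyc : ∃ j ∈ Finset.Icc 1 (n - 2),
      HasRainbowCycleOn G (Finset.Icc 1 (n - 2) \ {j})
        (({x, y, z} : Set V)ᶜ) (n - 4)) :
    ∀ k : ℕ, 4 ≤ k → k ≤ n - 1 →
      IsRainbowPathOn G (Finset.Icc 1 (n - 1)) Set.univ k x y := by
  classical
  intro k hk4 hkn
  obtain ⟨m, hm⟩ := hodd
  set d : ℕ := m - 2 with hddef
  have hnd : n = 2 * d + 5 := by omega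
  have hd1 : 1 ≤ d := by omega
  set L : ℕ := n - 4 with hLdef
  have hL3 : 3 ≤ L := by omega
  have hLd : L = 2 * d + 1 := by omega
  haveI : NeZero L := ⟨by omega⟩
  haveI : Fact (1 < L) := ⟨by omega⟩
  obtain ⟨j, hjmem, u, c, humem, huinj0, hcmem0, hcinj0, hl3, hadj0⟩ := hcyc
  obtain ⟨hj1, hj2⟩ := Finset.mem_Icc.1 hjmem
  set uu : ZMod L → V := fun a => u a.val with huu
  set cc : ZMod L → ℕ := fun a => c a.val with hcc
  have hvlt : ∀ a : ZMod L, a.val < L := fun a => ZMod.val_lt a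
  have hUinj : Function.Injective uu := by
    intro a b h
    have h2 := huinj0 a.val b.val (hvlt a) (hvlt b) h
    have := congrArg (fun m : ℕ => ((m : ℕ) : ZMod L)) h2
    simpa [ZMod.natCast_rightInverse a, ZMod.natCast_rightInverse b] using this
  have hCinj : Function.Injective cc := by
    intro a b h
    have h2 := hcinj0 a.val b.val (hvlt a) (hvlt b) h
    have := congrArg (fun m : ℕ => ((m : ℕ) : ZMod L)) h2
    simpa [ZMod.natCast_rightInverse a, ZMod.natCast_rightInverse b] using this
  have hAdj : ∀ a : ZMod L, (G (cc a)).Adj (uu a) (uu (a + 1)) := by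
    intro a
    have h1 := hadj0 a.val (hvlt a)
    have h2 : (a + 1).val = (a.val + 1) % L := by
      rw [ZMod.val_add, ZMod.val_one]
    show (G (c a.val)).Adj (u a.val) (u (a + 1).val)
    rw [h2]
    exact h1
  have hCmem : ∀ a : ZMod L, 1 ≤ cc a ∧ cc a ≤ n - 2 ∧ cc a ≠ j := by
    intro a
    have h1 := hcmem0 a.val (hvlt a)
    rw [Finset.mem_sdiff, Finset.mem_Icc, Finset.mem_singleton] at h1
    exact ⟨h1.1.1, h1.1.2, h1.2⟩
  have hC1 : ∀ a : ZMod L, 1 ≤ cc a := fun a => (hCmem a).1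
  have hC2 : ∀ a : ZMod L, cc a ≤ n - 2 := fun a => (hCmem a).2.1
  have hCj : ∀ a : ZMod L, cc a ≠ j := fun a => (hCmem a).2.2
  have hUxyz : ∀ a : ZMod L, uu a ≠ x ∧ uu a ≠ y ∧ uu a ≠ z := by
    intro a
    have h := humem a.val (hvlt a)
    simp only [Set.mem_compl_iff, Set.mem_insert_iff, Set.mem_singleton_iff, not_or] at h
    exact h
  have hUx : ∀ a : ZMod L, uu a ≠ x := fun a => (hUxyz a).1
  have hUy : ∀ a : ZMod L, uu a ≠ y := fun a => (hUxyz a).2.1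
  have hUz : ∀ a : ZMod L, uu a ≠ z := fun a => (hUxyz a).2.2
  -- the missing vertex w
  set CFin : Finset V := Finset.univ.image uu with hCFin
  have hCcard : CFin.card = L := by
    rw [hCFin, Finset.card_image_of_injective _ hUinj, Finset.card_univ, ZMod.card]
  have hCS : CFin ⊆ Finset.univ \ ({x, y, z} : Finset V) := by
    intro v hv
    rw [hCFin, Finset.mem_image] at hv
    obtain ⟨a, _, rfl⟩ := hv
    simp only [Finset.mem_sdiff, Finset.mem_univ, true_and, Finset.mem_insert,
      Finset.mem_singleton, not_or]
    exact ⟨hUx a, hUy a, hUz a⟩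
  have hxyzcard : ({x, y, z} : Finset V).card = 3 := by
    rw [Finset.card_insert_of_notMem (by simp [hxy, hzx.symm]),
      Finset.card_insert_of_notMem (by simp [hzy.symm]), Finset.card_singleton]
  have hScard : (Finset.univ \ ({x, y, z} : Finset V)).card = n - 3 := by
    rw [Finset.card_sdiff_of_subset (Finset.subset_univ _), Finset.card_univ, hV, hxyzcard]
  have hwex : ∃ w ∈ Finset.univ \ ({x, y, z} : Finset V), w ∉ CFin := by
    by_contra hcon
    push_neg at hcon
    have hsub2 : Finset.univ \ ({x, y, z} : Finset V) ⊆ CFin := hcon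
    have := Finset.card_le_card hsub2
    rw [hScard, hCcard] at this
    omega
  obtain ⟨w, hwS, hwC⟩ := hwex
  have hwxyz : w ≠ x ∧ w ≠ y ∧ w ≠ z := by
    simp only [Finset.mem_sdiff, Finset.mem_univ, true_and, Finset.mem_insert,
      Finset.mem_singleton, not_or] at hwS
    exact hwS
  obtain ⟨hwx, hwy, hwz⟩ := hwxyz
  have hUw : ∀ a : ZMod L, uu a ≠ w := by
    intro a h
    exact hwC (by rw [hCFin, Finset.mem_image]; exact ⟨a, Finset.mem_univ a, h⟩)
  -- coverage of all vertices
  have hFuniv : insert x (insert y (insert z (insert w CFin))) = Finset.univ := by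
    apply Finset.eq_univ_of_card
    have e1 : w ∉ CFin := hwC
    have e2 : z ∉ insert w CFin := by
      simp only [Finset.mem_insert, not_or]
      exact ⟨fun h => hwz h.symm, fun h => by
        rw [hCFin, Finset.mem_image] at h; obtain ⟨a, _, ha⟩ := h; exact hUz a ha⟩
    have e3 : y ∉ insert z (insert w CFin) := by
      simp only [Finset.mem_insert, not_or]
      exact ⟨fun h => hzy h.symm, fun h => hwy h.symm, fun h => by
        rw [hCFin, Finset.mem_image] at h; obtain ⟨a, _, ha⟩ := h; exact hUy a ha⟩
    have e4 : x ∉ insert y (insert z (insert w CFin)) := by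
      simp only [Finset.mem_insert, not_or]
      exact ⟨hxy, fun h => hzx h.symm, fun h => hwx h.symm, fun h => by
        rw [hCFin, Finset.mem_image] at h; obtain ⟨a, _, ha⟩ := h; exact hUx a ha⟩
    rw [Finset.card_insert_of_notMem e4, Finset.card_insert_of_notMem e3,
      Finset.card_insert_of_notMem e2, Finset.card_insert_of_notMem e1, hCcard, hV]
    omega
  have hcover : ∀ v : V, v = x ∨ v = y ∨ v = z ∨ v = w ∨ ∃ b : ZMod L, uu b = v := by
    intro v
    have hv : v ∈ insert x (insert y (insert z (insert w CFin))) := by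
      rw [hFuniv]; exact Finset.mem_univ v
    simp only [Finset.mem_insert, hCFin, Finset.mem_image] at hv
    rcases hv with h | h | h | h | ⟨b, _, hb⟩
    · exact Or.inl h
    · exact Or.inr (Or.inl h)
    · exact Or.inr (Or.inr (Or.inl h))
    · exact Or.inr (Or.inr (Or.inr (Or.inl h)))
    · exact Or.inr (Or.inr (Or.inr (Or.inr ⟨b, hb⟩)))
  -- the spare color s
  have hsex : ∃ s ∈ Finset.Icc 1 (n - 2) \ {j}, s ∉ Finset.univ.image cc := by
    by_contra hcon
    push_neg at hcon
    have hsub2 : Finset.Icc 1 (n - 2) \ {j} ⊆ Finset.univ.image cc := hcon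
    have hc1 := Finset.card_le_card hsub2
    have hc2 : (Finset.univ.image cc).card = L := by
      rw [Finset.card_image_of_injective _ hCinj, Finset.card_univ, ZMod.card]
    have hc3 : (Finset.Icc 1 (n - 2) \ {j}).card = n - 3 := by
      rw [Finset.card_sdiff_of_subset (Finset.singleton_subset_iff.2 hjmem), Nat.card_Icc]
      simp
      omega
    omega
  obtain ⟨s, hsD, hsC⟩ := hsex
  have hs12 : 1 ≤ s ∧ s ≤ n - 2 ∧ s ≠ j := by
    rw [Finset.mem_sdiff, Finset.mem_Icc, Finset.mem_singleton] at hsD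
    exact ⟨hsD.1.1, hsD.1.2, hsD.2⟩
  obtain ⟨hs1, hs2, hsj⟩ := hs12
  have hCs : ∀ a : ZMod L, cc a ≠ s := by
    intro a h
    exact hsC (by rw [Finset.mem_image]; exact ⟨a, Finset.mem_univ a, h⟩)
  -- position neighbour sets
  have hmem4 : ∀ v' : V, (v' = x ∨ v' = y ∨ v' = z ∨ v' = w) → v' ∈ ({x, y, z, w} : Finset V) := by
    intro v' h
    simp only [Finset.mem_insert, Finset.mem_singleton]
    tauto
  have hwset4 : ({x, y, z, w} : Finset V).card = 4 := by
    rw [Finset.card_insert_of_notMem (by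
      simp only [Finset.mem_insert, Finset.mem_singleton, not_or]
      exact ⟨hxy, fun h => hzx h.symm, fun h => hwx h.symm⟩),
      Finset.card_insert_of_notMem (by
      simp only [Finset.mem_insert, Finset.mem_singleton, not_or]
      exact ⟨fun h => hzy h.symm, fun h => hwy h.symm⟩),
      Finset.card_insert_of_notMem (by
      simp only [Finset.mem_singleton]
      exact fun h => hwz h.symm), Finset.card_singleton]
  have hbound0 : ∀ (vv : V) (α : ℕ), 1 ≤ α → α ≤ n - 1 →
      (vv = x ∨ vv = y ∨ vv = z ∨ vv = w) →
      d ≤ (Finset.univ.filter (fun a => (G α).Adj vv (uu a))).card := by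
    intro vv α hα1 hα2 hvv
    have hTcard : (({x, y, z, w} : Finset V).erase vv).card = 3 := by
      rw [Finset.card_erase_of_mem (hmem4 vv hvv), hwset4]
    have hcov : ∀ v'' : V, (G α).Adj vv v'' →
        v'' ∈ ({x, y, z, w} : Finset V).erase vv ∨ ∃ b : ZMod L, uu b = v'' := by
      intro v'' hadj2
      rcases hcover v'' with h | h | h | h | h
      · exact Or.inl (Finset.mem_erase.2 ⟨hadj2.ne', hmem4 v'' (Or.inl h)⟩)
      · exact Or.inl (Finset.mem_erase.2 ⟨hadj2.ne', hmem4 v'' (Or.inr (Or.inl h))⟩)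
      · exact Or.inl (Finset.mem_erase.2 ⟨hadj2.ne', hmem4 v'' (Or.inr (Or.inr (Or.inl h)))⟩)
      · exact Or.inl (Finset.mem_erase.2 ⟨hadj2.ne', hmem4 v'' (Or.inr (Or.inr (Or.inr h)))⟩)
      · exact Or.inr h
    have hcc := coverCount (G α) vv uu _ _
      (fun b hb => Finset.mem_filter.2 ⟨Finset.mem_univ b, hb⟩) hcov
    have hdeg2 := hdeg α (Finset.mem_Icc.2 ⟨hα1, hα2⟩) vv
    rw [hTcard] at hcc
    omega
  have hbound : ∀ (vv v2 : V) (α : ℕ), 1 ≤ α → α ≤ n - 1 →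
      (vv = x ∨ vv = y ∨ vv = z ∨ vv = w) → (v2 = x ∨ v2 = y ∨ v2 = z ∨ v2 = w) →
      v2 ≠ vv → ¬ (G α).Adj vv v2 →
      d + 1 ≤ (Finset.univ.filter (fun a => (G α).Adj vv (uu a))).card := by
    intro vv v2 α hα1 hα2 hvv hv2 hne hna
    have hTcard : ((({x, y, z, w} : Finset V).erase vv).erase v2).card = 2 := by
      rw [Finset.card_erase_of_mem (Finset.mem_erase.2 ⟨hne, hmem4 v2 hv2⟩),
        Finset.card_erase_of_mem (hmem4 vv hvv), hwset4]
    have hcov : ∀ v'' : V, (G α).Adj vv v'' →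
        v'' ∈ (({x, y, z, w} : Finset V).erase vv).erase v2 ∨ ∃ b : ZMod L, uu b = v'' := by
      intro v'' hadj2
      have hvne : v'' ≠ v2 := by
        intro h
        rw [h] at hadj2
        exact hna hadj2
      rcases hcover v'' with h | h | h | h | h
      · exact Or.inl (Finset.mem_erase.2 ⟨hvne, Finset.mem_erase.2 ⟨hadj2.ne', hmem4 v'' (Or.inl h)⟩⟩)
      · exact Or.inl (Finset.mem_erase.2 ⟨hvne, Finset.mem_erase.2 ⟨hadj2.ne', hmem4 v'' (Or.inr (Or.inl h))⟩⟩)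
      · exact Or.inl (Finset.mem_erase.2 ⟨hvne, Finset.mem_erase.2 ⟨hadj2.ne', hmem4 v'' (Or.inr (Or.inr (Or.inl h)))⟩⟩)
      · exact Or.inl (Finset.mem_erase.2 ⟨hvne, Finset.mem_erase.2 ⟨hadj2.ne', hmem4 v'' (Or.inr (Or.inr (Or.inr h)))⟩⟩)
      · exact Or.inr h
    have hcc := coverCount (G α) vv uu _ _
      (fun b hb => Finset.mem_filter.2 ⟨Finset.mem_univ b, hb⟩) hcov
    have hdeg2 := hdeg α (Finset.mem_Icc.2 ⟨hα1, hα2⟩) vv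
    rw [hTcard] at hcc
    omega
  set X : Finset (ZMod L) := Finset.univ.filter (fun a => (G (n - 1)).Adj x (uu a)) with hXdef
  set Yj : Finset (ZMod L) := Finset.univ.filter (fun a => (G j).Adj y (uu a)) with hYjdef
  set Wj : Finset (ZMod L) := Finset.univ.filter (fun a => (G j).Adj w (uu a)) with hWjdef
  set Ws : Finset (ZMod L) := Finset.univ.filter (fun a => (G s).Adj w (uu a)) with hWsdef
  have hX : d + 1 ≤ X.card := by
    rw [hXdef]
    exact hbound x z (n - 1) (by omega) le_rfl (Or.inl rfl) (Or.inr (Or.inr (Or.inl rfl)))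
      hzx hxz
  have hYjb : d ≤ Yj.card := by
    rw [hYjdef]
    exact hbound0 y j hj1 (by omega) (Or.inr (Or.inl rfl))
  have hWjb : d ≤ Wj.card := by
    rw [hWjdef]
    exact hbound0 w j hj1 (by omega) (Or.inr (Or.inr (Or.inr rfl)))
  have hWsb : d ≤ Ws.card := by
    rw [hWsdef]
    exact hbound0 w s hs1 (by omega) (Or.inr (Or.inr (Or.inr rfl)))
  have hnoc : ∀ a : ZMod L, ¬ (a ∈ Wj ∧ a + 1 ∈ Ws) := by
    rintro a ⟨h1, h2⟩
    rw [hWjdef, Finset.mem_filter] at h1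
    rw [hWsdef, Finset.mem_filter] at h2
    exact hamContra n L G x y z w j s hn hLdef hnoham uu cc hUinj hCinj hAdj hC1 hC2
      hj1 hj2 hs1 hs2 (fun h => hsj h.symm) hCj hCs hUx hUy hUz hUw hwx hwy hwz hcover
      a h1.2 h2.2
  have hnoc' : ∀ a : ZMod L, ¬ (a ∈ Ws ∧ a + 1 ∈ Wj) := by
    rintro a ⟨h1, h2⟩
    rw [hWsdef, Finset.mem_filter] at h1
    rw [hWjdef, Finset.mem_filter] at h2
    exact hamContra n L G x y z w s j hn hLdef hnoham uu cc hUinj hCinj hAdj hC1 hC2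
      hs1 hs2 hj1 hj2 hsj hCs hCj hUx hUy hUz hUw hwx hwy hwz hcover
      a h1.2 h2.2
  have hWjle : Wj.card ≤ d := Wbound hLd hd1 Wj Ws hWsb hnoc hnoc'
  have hWsle : Ws.card ≤ d := Wbound hLd hd1 Ws Wj hWjb hnoc' hnoc
  have hwyj : (G j).Adj w y := by
    by_contra hna
    have hb2 := hbound w y j hj1 (by omega) (Or.inr (Or.inr (Or.inr rfl)))
      (Or.inr (Or.inl rfl)) (fun h => hwy h.symm) hna
    rw [← hWjdef] at hb2
    omega
  have hwys : (G s).Adj w y := by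
    by_contra hna
    have hb2 := hbound w y s hs1 (by omega) (Or.inr (Or.inr (Or.inr rfl)))
      (Or.inr (Or.inl rfl)) (fun h => hwy h.symm) hna
    rw [← hWsdef] at hb2
    omega
  -- helpers to apply the shape lemmas in both directions
  have usePplus : ∀ (t : ℕ), 1 ≤ t → t + 1 ≤ L → ∀ p : ZMod L, p ∈ X →
      p + (t : ZMod L) ∈ Yj →
      IsRainbowPathOn G (Finset.Icc 1 (n - 1)) Set.univ (t + 3) x y := by
    intro t ht1 htL p hp hq
    rw [hXdef, Finset.mem_filter] at hp
    rw [hYjdef, Finset.mem_filter] at hq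
    exact shapeP n L G x y j hj1 hj2 hn uu cc hUinj hCinj hAdj hC1 hC2 hCj hUx hUy hxy
      t ht1 htL p hp.2 hq.2
  have usePminus : ∀ (t : ℕ), 1 ≤ t → t + 1 ≤ L → ∀ p : ZMod L, p ∈ X →
      p - (t : ZMod L) ∈ Yj →
      IsRainbowPathOn G (Finset.Icc 1 (n - 1)) Set.univ (t + 3) x y := by
    intro t ht1 htL p hp hq
    rw [hXdef, Finset.mem_filter] at hp
    rw [hYjdef, Finset.mem_filter] at hq
    refine shapeP n L G x y j hj1 hj2 hn (fun a => uu (-a)) (fun a => cc (-a - 1))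
      (fun a b h => neg_injective (hUinj h))
      (fun a b h => by
        have h2 : (-a - 1 : ZMod L) = -b - 1 := hCinj h
        have h3 : (-a : ZMod L) = -b := by linear_combination h2
        exact neg_injective h3)
      (fun a => by
        have h1 := (hAdj (-a - 1)).symm
        have e1 : (-a - 1 : ZMod L) + 1 = -a := by ring
        rw [e1] at h1
        show (G (cc (-a - 1))).Adj (uu (-a)) (uu (-(a + 1)))
        have e2 : (-(a + 1) : ZMod L) = -a - 1 := by ring
        rw [e2]
        exact h1)
      (fun a => hC1 _) (fun a => hC2 _) (fun a => hCj _) (fun a => hUx _) (fun a => hUy _)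
      hxy t ht1 htL (-p) ?_ ?_
    · show (G (n - 1)).Adj x (uu (-(-p)))
      rw [neg_neg]
      exact hp.2
    · show (G j).Adj y (uu (-(-p + (t : ZMod L))))
      have e : (-(-p + (t : ZMod L)) : ZMod L) = p - (t : ZMod L) := by ring
      rw [e]
      exact hq.2
  set WU : Finset (ZMod L) := Wj ∪ Ws with hWUdef
  have hWUb : d ≤ WU.card := le_trans hWjb (Finset.card_le_card Finset.subset_union_left)
  have useWplus : ∀ (t : ℕ), 1 ≤ t → t + 1 ≤ L → ∀ p : ZMod L, p ∈ X →
      p + (t : ZMod L) ∈ WU →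
      IsRainbowPathOn G (Finset.Icc 1 (n - 1)) Set.univ (t + 4) x y := by
    intro t ht1 htL p hp hq
    rw [hXdef, Finset.mem_filter] at hp
    rw [hWUdef, Finset.mem_union] at hq
    rcases hq with hq | hq
    · rw [hWjdef, Finset.mem_filter] at hq
      exact shapeW n L G x y w j s hj1 hj2 hs1 hs2 (fun h => hsj h.symm) hn uu cc
        hUinj hCinj hAdj hC1 hC2 hCj hCs hUx hUy hUw hxy hwx hwy
        t ht1 htL p hp.2 hq.2 hwys
    · rw [hWsdef, Finset.mem_filter] at hq
      exact shapeW n L G x y w s j hs1 hs2 hj1 hj2 hsj hn uu cc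
        hUinj hCinj hAdj hC1 hC2 hCs hCj hUx hUy hUw hxy hwx hwy
        t ht1 htL p hp.2 hq.2 hwyj
  have useWminus : ∀ (t : ℕ), 1 ≤ t → t + 1 ≤ L → ∀ p : ZMod L, p ∈ X →
      p - (t : ZMod L) ∈ WU →
      IsRainbowPathOn G (Finset.Icc 1 (n - 1)) Set.univ (t + 4) x y := by
    intro t ht1 htL p hp hq
    rw [hXdef, Finset.mem_filter] at hp
    rw [hWUdef, Finset.mem_union] at hq
    have hxp' : (G (n - 1)).Adj x ((fun a : ZMod L => uu (-a)) (-p)) := by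
      show (G (n - 1)).Adj x (uu (-(-p)))
      rw [neg_neg]
      exact hp.2
    have hVinj : Function.Injective (fun a : ZMod L => uu (-a)) :=
      fun a b h => neg_injective (hUinj h)
    have hVCinj : Function.Injective (fun a : ZMod L => cc (-a - 1)) := by
      intro a b h
      have h2 : (-a - 1 : ZMod L) = -b - 1 := hCinj h
      have h3 : (-a : ZMod L) = -b := by linear_combination h2
      exact neg_injective h3
    have hVAdj : ∀ a : ZMod L, (G ((fun a : ZMod L => cc (-a - 1)) a)).Adj
        ((fun a : ZMod L => uu (-a)) a) ((fun a : ZMod L => uu (-a)) (a + 1)) := by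
      intro a
      have h1 := (hAdj (-a - 1)).symm
      have e1 : (-a - 1 : ZMod L) + 1 = -a := by ring
      rw [e1] at h1
      show (G (cc (-a - 1))).Adj (uu (-a)) (uu (-(a + 1)))
      have e2 : (-(a + 1) : ZMod L) = -a - 1 := by ring
      rw [e2]
      exact h1
    have hqe : (-(-p + (t : ZMod L)) : ZMod L) = p - (t : ZMod L) := by ring
    rcases hq with hq | hq
    · rw [hWjdef, Finset.mem_filter] at hq
      refine shapeW n L G x y w j s hj1 hj2 hs1 hs2 (fun h => hsj h.symm) hn
        (fun a => uu (-a)) (fun a => cc (-a - 1)) hVinj hVCinj hVAdj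
        (fun a => hC1 _) (fun a => hC2 _) (fun a => hCj _) (fun a => hCs _)
        (fun a => hUx _) (fun a => hUy _) (fun a => hUw _) hxy hwx hwy
        t ht1 htL (-p) hxp' ?_ hwys
      show (G j).Adj w (uu (-(-p + (t : ZMod L))))
      rw [hqe]
      exact hq.2
    · rw [hWsdef, Finset.mem_filter] at hq
      refine shapeW n L G x y w s j hs1 hs2 hj1 hj2 hsj hn
        (fun a => uu (-a)) (fun a => cc (-a - 1)) hVinj hVCinj hVAdj
        (fun a => hC1 _) (fun a => hC2 _) (fun a => hCs _) (fun a => hCj _)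
        (fun a => hUx _) (fun a => hUy _) (fun a => hUw _) hxy hwx hwy
        t ht1 htL (-p) hxp' ?_ hwyj
      show (G s).Adj w (uu (-(-p + (t : ZMod L))))
      rw [hqe]
      exact hq.2
  -- final case analysis on k
  rcases Nat.lt_or_ge k (n - 1) with hklt | hkge
  · -- 4 ≤ k ≤ n - 2
    have hkle : k ≤ n - 2 := by omega
    have ht1 : 1 ≤ k - 3 := by omega
    have htL : (k - 3) + 1 ≤ L := by omega
    have hek : (k - 3) + 3 = k := by omega
    by_cases hk5 : 5 ≤ k
    · have ht'1 : 1 ≤ k - 4 := by omega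
      have ht'L : (k - 4) + 1 ≤ L := by omega
      have hek' : (k - 4) + 4 = k := by omega
      have hcast : ((k - 4 : ℕ) : ZMod L) = ((k - 3 : ℕ) : ZMod L) - 1 := by
        have e : k - 4 = (k - 3) - 1 := by omega
        rw [e, Nat.cast_sub (by omega : 1 ≤ k - 3), Nat.cast_one]
      rcases goodPair2 hLd hd1 X Yj WU ((k - 3 : ℕ) : ZMod L) hX hYjb hWUb with h | h
      · obtain ⟨p, hp, hq | hq⟩ := h
        · rw [← hek]; exact usePplus (k - 3) ht1 htL p hp hq
        · rw [← hek]; exact usePminus (k - 3) ht1 htL p hp hq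
      · obtain ⟨p, hp, hq | hq⟩ := h
        · rw [← hek']
          refine useWplus (k - 4) ht'1 ht'L p hp ?_
          rw [hcast]
          exact hq
        · rw [← hek']
          refine useWminus (k - 4) ht'1 ht'L p hp ?_
          rw [hcast]
          exact hq
    · have hkeq : k = 4 := by omega
      have htz : ((k - 3 : ℕ) : ZMod L) = 1 ∨ ((k - 3 : ℕ) : ZMod L) = -1 := by
        left
        rw [show k - 3 = 1 by omega, Nat.cast_one]
      rcases goodPair hLd hd1 X Yj ((k - 3 : ℕ) : ZMod L) hX hYjb htz with ⟨p, hp, hq | hq⟩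
      · rw [← hek]; exact usePplus (k - 3) ht1 htL p hp hq
      · rw [← hek]; exact usePminus (k - 3) ht1 htL p hp hq
  · -- k = n - 1
    have hkeq : k = n - 1 := by omega
    have ht'1 : 1 ≤ k - 4 := by omega
    have ht'L : (k - 4) + 1 ≤ L := by omega
    have hek' : (k - 4) + 4 = k := by omega
    have hcast : ((k - 4 : ℕ) : ZMod L) = -1 := by
      have e : k - 4 = L - 1 := by omega
      rw [e, Nat.cast_sub (by omega : 1 ≤ L), ZMod.natCast_self, Nat.cast_one]
      ring
    rcases goodPair hLd hd1 X WU ((k - 4 : ℕ) : ZMod L) hX hWUb (Or.inr hcast) with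
      ⟨p, hp, hq | hq⟩
    · rw [← hek']; exact useWplus (k - 4) ht'1 ht'L p hp hq
    · rw [← hek']; exact useWminus (k - 4) ht'1 ht'L p hp hq
end

section
/- Assume the Setup, and assume that 𝐇 contains neither a rainbow (n−3)-cycle nor a rainbow (n−4)-cycle. Let P* be a rainbow Hamiltonian path in 𝐇 (a rainbow path through all n−3 vertices of V ∖ {x, y, z}) with endpoints w_1 and w_2, let φ : E(P*) → {1, …, n−2} be a corresponding injection, and let {f_1, f_2} = {1, …, n−2} ∖ im(φ). Then n−5 ≤ |N_{G_{f_1}}(w_1) ∩ (V ∖ {x, y, z})| + |N_{G_{f_2}}(w_2) ∩ (V ∖ {x, y, z})| ≤ n−4; moreover each of |N_{G_{f_1}}(w_1) ∩ (V ∖ {x, y, z})| and |N_{G_{f_2}}(w_2) ∩ (V ∖ {x, y, z})| lies between (n−5)/2 and (n−3)/2. -/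
set_option autoImplicit false

lemma build_cycle_aux {V : Type*} (n : ℕ) (hn : 7 ≤ n) (G : ℕ → SimpleGraph V)
    (x y z : V)
    (u : ℕ → V) (c : ℕ → ℕ)
    (hu_cover : ∀ v : V, v ∈ (({x, y, z} : Set V)ᶜ) ↔ ∃ i, i < n - 3 ∧ u i = v)
    (hu_inj : ∀ i j, i < n - 3 → j < n - 3 → u i = u j → i = j)
    (hc_mem : ∀ i, i + 1 < n - 3 → c i ∈ Finset.Icc 1 (n - 2))
    (hc_inj : ∀ i j, i + 1 < n - 3 → j + 1 < n - 3 → c i = c j → i = j)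
    (hadj : ∀ i, i + 1 < n - 3 → (G (c i)).Adj (u i) (u (i + 1)))
    (f1 f2 : ℕ) (hf1D : f1 ∈ Finset.Icc 1 (n - 2)) (hf2D : f2 ∈ Finset.Icc 1 (n - 2))
    (hf12 : f1 ≠ f2)
    (hf1 : ∀ i, i + 1 < n - 3 → c i ≠ f1)
    (hf2 : ∀ i, i + 1 < n - 3 → c i ≠ f2)
    (i : ℕ) (hi : i < n - 4)
    (h1 : (G f1).Adj (u 0) (u (i + 1)))
    (h2 : (G f2).Adj (u (n - 4)) (u i)) :
    HasRainbowCycleOn G (Finset.Icc 1 (n - 2)) (({x, y, z} : Set V)ᶜ) (n - 3) := by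
  refine ⟨fun j => if j ≤ i then u j else u (n - 3 + i - j),
    fun j => if j < i then c j else if j = i then f2
      else if j < n - 4 then c (n - 4 + i - j) else f1,
    ?_, ?_, ?_, ?_, by omega, ?_⟩
  · intro j hj
    dsimp only
    split_ifs with h
    · exact (hu_cover _).2 ⟨j, by omega, rfl⟩
    · exact (hu_cover _).2 ⟨n - 3 + i - j, by omega, rfl⟩
  · intro j j' hj hj' heq
    dsimp only at heq
    split_ifs at heq <;>
      (have := hu_inj _ _ (by omega) (by omega) heq; omega)
  · intro j hj
    dsimp only
    split_ifs with h h' h''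
    · exact hc_mem _ (by omega)
    · exact hf2D
    · exact hc_mem _ (by omega)
    · exact hf1D
  · intro j j' hj hj' heq
    dsimp only at heq
    split_ifs at heq <;>
      first
        | omega
        | (have := hc_inj _ _ (by omega) (by omega) heq; omega)
        | exact absurd heq (hf1 _ (by omega))
        | exact absurd heq (hf2 _ (by omega))
        | exact absurd heq.symm (hf1 _ (by omega))
        | exact absurd heq.symm (hf2 _ (by omega))
        | exact absurd heq hf12
        | exact absurd heq.symm hf12
  · intro j hj
    dsimp only
    rcases Nat.lt_trichotomy j i with h | h | h
    · have e1 : (j + 1) % (n - 3) = j + 1 := Nat.mod_eq_of_lt (by omega)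
      rw [e1]
      split_ifs <;> first | omega | exact hadj j (by omega)
    · subst h
      have e1 : (j + 1) % (n - 3) = j + 1 := Nat.mod_eq_of_lt (by omega)
      rw [e1]
      split_ifs <;>
        first
          | omega
          | (rw [show n - 3 + j - (j + 1) = n - 4 by omega]; exact h2.symm)
    · by_cases h4 : j = n - 4
      · subst h4
        have e1 : (n - 4 + 1) % (n - 3) = 0 := by
          rw [show n - 4 + 1 = n - 3 by omega]; exact Nat.mod_self _
        rw [e1]
        split_ifs <;>
          first
            | omega
            | (rw [show n - 3 + i - (n - 4) = i + 1 by omega]; exact h1.symm)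
      · have e1 : (j + 1) % (n - 3) = j + 1 := Nat.mod_eq_of_lt (by omega)
        rw [e1]
        split_ifs <;>
          first
            | omega
            | (rw [show n - 3 + i - j = (n - 4 + i - j) + 1 by omega,
                  show n - 3 + i - (j + 1) = n - 4 + i - j by omega];
               exact (hadj (n - 4 + i - j) (by omega)).symm)

/-- Lemma 5. Under the Setup, if `𝐇` contains neither a rainbow
`(n-3)`-cycle nor a rainbow `(n-4)`-cycle, and `P* = u 0 ⋯ u (n-4)` is a rainbow
Hamiltonian path in `𝐇` (colors `c i ∈ {1,…,n-2}`), and `f1 ≠ f2` are the two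
colors of `{1,…,n-2}` unused by `P*`, then, writing `a` and `b` for the numbers
of neighbours of the endpoints `u 0` in `G f1` and `u (n-4)` in `G f2` inside
`V \ {x,y,z}`, we have `n-5 ≤ a + b ≤ n-4` and `(n-5)/2 ≤ a, b ≤ (n-3)/2`. -/
theorem statement5 {V : Type*} [Fintype V] (n : ℕ) (hn : 7 ≤ n) (hodd : Odd n)
    (hV : Fintype.card V = n) (G : ℕ → SimpleGraph V)
    (hdeg : ∀ i ∈ Finset.Icc 1 (n - 1), ∀ v : V,
      n + 1 ≤ 2 * ((G i).neighborSet v).ncard)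
    (x y z : V) (hxy : x ≠ y) (hzx : z ≠ x) (hzy : z ≠ y)
    (hxz : ¬ (G (n - 1)).Adj x z)
    (hC3 : ¬ HasRainbowCycleOn G (Finset.Icc 1 (n - 2))
      (({x, y, z} : Set V)ᶜ) (n - 3))
    (hC4 : ¬ HasRainbowCycleOn G (Finset.Icc 1 (n - 2))
      (({x, y, z} : Set V)ᶜ) (n - 4))
    (u : ℕ → V) (c : ℕ → ℕ)
    (hu_cover : ∀ v : V, v ∈ (({x, y, z} : Set V)ᶜ) ↔ ∃ i, i < n - 3 ∧ u i = v)
    (hu_inj : ∀ i j, i < n - 3 → j < n - 3 → u i = u j → i = j)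
    (hc_mem : ∀ i, i + 1 < n - 3 → c i ∈ Finset.Icc 1 (n - 2))
    (hc_inj : ∀ i j, i + 1 < n - 3 → j + 1 < n - 3 → c i = c j → i = j)
    (hadj : ∀ i, i + 1 < n - 3 → (G (c i)).Adj (u i) (u (i + 1)))
    (f1 f2 : ℕ) (hf1D : f1 ∈ Finset.Icc 1 (n - 2)) (hf2D : f2 ∈ Finset.Icc 1 (n - 2))
    (hf12 : f1 ≠ f2)
    (hf1 : ∀ i, i + 1 < n - 3 → c i ≠ f1)
    (hf2 : ∀ i, i + 1 < n - 3 → c i ≠ f2) :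
    (n - 5 ≤ ((G f1).neighborSet (u 0) \ {x, y, z}).ncard +
        ((G f2).neighborSet (u (n - 4)) \ {x, y, z}).ncard) ∧
    (((G f1).neighborSet (u 0) \ {x, y, z}).ncard +
        ((G f2).neighborSet (u (n - 4)) \ {x, y, z}).ncard ≤ n - 4) ∧
    (n - 5 ≤ 2 * ((G f1).neighborSet (u 0) \ {x, y, z}).ncard) ∧
    (2 * ((G f1).neighborSet (u 0) \ {x, y, z}).ncard ≤ n - 3) ∧
    (n - 5 ≤ 2 * ((G f2).neighborSet (u (n - 4)) \ {x, y, z}).ncard) ∧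
    (2 * ((G f2).neighborSet (u (n - 4)) \ {x, y, z}).ncard ≤ n - 3) := by
  classical
  -- the finsets of path-indices giving neighbours of the endpoints
  set A : Finset ℕ :=
    (Finset.range (n - 4)).filter (fun i => (G f1).Adj (u 0) (u (i + 1))) with hA
  set B : Finset ℕ :=
    (Finset.range (n - 4)).filter (fun i => (G f2).Adj (u (n - 4)) (u i)) with hB
  -- the two neighbourhood counts equal |A| and |B|
  have hAcard : ((G f1).neighborSet (u 0) \ {x, y, z}).ncard = A.card := by
    have himg : (G f1).neighborSet (u 0) \ {x, y, z}
        = ↑(A.image (fun i => u (i + 1))) := by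
      ext v
      simp only [hA, Finset.coe_image, Set.mem_image, Finset.mem_coe,
        Finset.mem_filter, Finset.mem_range, Set.mem_diff,
        SimpleGraph.mem_neighborSet]
      constructor
      · rintro ⟨hadjv, hv⟩
        obtain ⟨j, hj, rfl⟩ := (hu_cover v).1 hv
        have hj0 : j ≠ 0 := by
          rintro rfl
          exact (G f1).loopless.irrefl _ hadjv
        refine ⟨j - 1, ⟨by omega, ?_⟩, ?_⟩ <;>
          rw [show j - 1 + 1 = j by omega]
        exact hadjv
      · rintro ⟨i, ⟨hi, hadj'⟩, rfl⟩
        have hmem := (hu_cover (u (i + 1))).2 ⟨i + 1, by omega, rfl⟩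
        exact ⟨hadj', hmem⟩
    rw [himg, Set.ncard_coe_finset]
    apply Finset.card_image_of_injOn
    intro a ha b hb hab
    simp only [hA, Finset.mem_coe, Finset.mem_filter, Finset.mem_range] at ha hb
    have := hu_inj (a + 1) (b + 1) (by omega) (by omega) hab
    omega
  have hBcard : ((G f2).neighborSet (u (n - 4)) \ {x, y, z}).ncard = B.card := by
    have himg : (G f2).neighborSet (u (n - 4)) \ {x, y, z}
        = ↑(B.image u) := by
      ext v
      simp only [hB, Finset.coe_image, Set.mem_image, Finset.mem_coe,
        Finset.mem_filter, Finset.mem_range, Set.mem_diff,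
        SimpleGraph.mem_neighborSet]
      constructor
      · rintro ⟨hadjv, hv⟩
        obtain ⟨j, hj, rfl⟩ := (hu_cover v).1 hv
        have hj0 : j ≠ n - 4 := by
          rintro rfl
          exact (G f2).loopless.irrefl _ hadjv
        exact ⟨j, ⟨by omega, hadjv⟩, rfl⟩
      · rintro ⟨i, ⟨hi, hadj'⟩, rfl⟩
        have hmem := (hu_cover (u i)).2 ⟨i, by omega, rfl⟩
        exact ⟨hadj', hmem⟩
    rw [himg, Set.ncard_coe_finset]
    apply Finset.card_image_of_injOn
    intro a ha b hb hab
    simp only [hB, Finset.mem_coe, Finset.mem_filter, Finset.mem_range] at ha hb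
    exact hu_inj a b (by omega) (by omega) hab
  -- A and B are disjoint, otherwise we get a rainbow (n-3)-cycle
  have hdisj : Disjoint A B := by
    rw [Finset.disjoint_left]
    intro i hiA hiB
    simp only [hA, hB, Finset.mem_filter, Finset.mem_range] at hiA hiB
    exact hC3 (build_cycle_aux n hn G x y z u c hu_cover hu_inj hc_mem hc_inj
      hadj f1 f2 hf1D hf2D hf12 hf1 hf2 i hiA.1 hiA.2 hiB.2)
  have hsum : A.card + B.card ≤ n - 4 := by
    rw [← Finset.card_union_of_disjoint hdisj]
    calc (A ∪ B).card ≤ (Finset.range (n - 4)).card := by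
          apply Finset.card_le_card
          intro i hi
          rcases Finset.mem_union.1 hi with h | h <;>
            · simp only [hA, hB, Finset.mem_filter] at h
              exact h.1
      _ = n - 4 := Finset.card_range _
  -- lower bounds from the degree condition
  have hxyz3 : ({x, y, z} : Set V).ncard ≤ 3 := by
    have h1 : ({x, y, z} : Set V).ncard ≤ ({y, z} : Set V).ncard + 1 :=
      Set.ncard_insert_le _ _
    have h2 : ({y, z} : Set V).ncard ≤ ({z} : Set V).ncard + 1 :=
      Set.ncard_insert_le _ _
    have h3 : ({z} : Set V).ncard = 1 := Set.ncard_singleton _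
    omega
  have hlow : ∀ (w : V) (f : ℕ), f ∈ Finset.Icc 1 (n - 2) →
      n - 5 ≤ 2 * ((G f).neighborSet w \ {x, y, z}).ncard := by
    intro w f hf
    have hfD : f ∈ Finset.Icc 1 (n - 1) := by
      simp only [Finset.mem_Icc] at hf ⊢; omega
    have hd := hdeg f hfD w
    have hdiff : ((G f).neighborSet w).ncard ≤
        ((G f).neighborSet w \ {x, y, z}).ncard + ({x, y, z} : Set V).ncard :=
      Set.ncard_le_ncard_diff_add_ncard _ _ (Set.toFinite _)
    omega
  have hlow1 := hlow (u 0) f1 hf1D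
  have hlow2 := hlow (u (n - 4)) f2 hf2D
  refine ⟨by omega, by omega, by omega, by omega, by omega, by omega⟩
end

section
/- Assume the Setup. Suppose that for some j ∈ {1, …, n−2} there is a partition V ∖ {x, y, z} = U_1 ∪ U_2 with |U_1| = |U_2| = (n−3)/2 such that for every i ∈ {1, …, n−2} ∖ {j}, the graph H_i is the disjoint union of the complete graph on U_1 and the complete graph on U_2 (so H_i = K_{(n−3)/2} ∪ K_{(n−3)/2} with the same two parts for all such i). Then for every integer k with 4 ≤ k ≤ n−1 there exists a rainbow k-path joining x and y in 𝐆. -/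
set_option autoImplicit false

set_option maxHeartbeats 1000000

lemma set_enum' {V : Type*} [Fintype V] (S : Set V) (hS : S.Nonempty) :
    ∃ f : ℕ → V, (∀ i, i < S.ncard → f i ∈ S) ∧
      (∀ i j, i < S.ncard → j < S.ncard → f i = f j → i = j) ∧
      (∀ v ∈ S, ∃ i, i < S.ncard ∧ f i = v) := by
  classical
  obtain ⟨v0, _⟩ := hS
  have hlen : S.toFinset.toList.length = S.ncard := by
    rw [Set.ncard_eq_toFinset_card']; exact S.toFinset.length_toList
  refine ⟨fun i => if h : i < S.toFinset.toList.length then S.toFinset.toList.get ⟨i, h⟩ else v0,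
    ?_, ?_, ?_⟩
  · intro i hi
    dsimp only; rw [dif_pos (hlen ▸ hi)]
    have := List.get_mem S.toFinset.toList ⟨i, hlen ▸ hi⟩
    rwa [Finset.mem_toList, Set.mem_toFinset] at this
  · intro i j hi hj h
    dsimp only at h; rw [dif_pos (hlen ▸ hi), dif_pos (hlen ▸ hj)] at h
    have h2 := List.Nodup.get_inj_iff S.toFinset.nodup_toList |>.mp h
    exact congrArg Fin.val h2
  · intro v hv
    have hv' : v ∈ S.toFinset.toList := by rw [Finset.mem_toList, Set.mem_toFinset]; exact hv
    obtain ⟨i, hi⟩ := List.mem_iff_get.mp hv'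
    exact ⟨i, hlen ▸ i.isLt, by dsimp only; rw [dif_pos i.isLt]; exact hi⟩

/-- Lemma: `𝐇_j` consists of copies of `K_{(n-3)/2} ∪ K_{(n-3)/2}`.
Under the Setup, if for some `j` there is a partition `V \ {x,y,z} = U₁ ∪ U₂`
into two sets of size `(n-3)/2` such that for every `i ∈ {1,…,n-2}` with `i ≠ j`
the graph `H i` is the disjoint union of complete graphs on `U₁` and `U₂`, then
for every `k` with `4 ≤ k ≤ n-1` there is a rainbow `k`-path joining `x` and `y`
in `𝐆`. -/
theorem statement7 {V : Type*} [Fintype V] (n : ℕ) (hn : 7 ≤ n) (hodd : Odd n)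
    (hV : Fintype.card V = n) (G : ℕ → SimpleGraph V)
    (hdeg : ∀ i ∈ Finset.Icc 1 (n - 1), ∀ v : V,
      n + 1 ≤ 2 * ((G i).neighborSet v).ncard)
    (x y z : V) (hxy : x ≠ y) (hzx : z ≠ x) (hzy : z ≠ y)
    (hxz : ¬ (G (n - 1)).Adj x z)
    (hsplit : ∃ j ∈ Finset.Icc 1 (n - 2), ∃ U1 U2 : Set V,
      U1 ∪ U2 = (({x, y, z} : Set V)ᶜ) ∧ Disjoint U1 U2 ∧
      2 * U1.ncard = n - 3 ∧ 2 * U2.ncard = n - 3 ∧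
      ∀ i ∈ Finset.Icc 1 (n - 2), i ≠ j →
        ∀ a b : V, a ∈ (({x, y, z} : Set V)ᶜ) → b ∈ (({x, y, z} : Set V)ᶜ) →
          ((G i).Adj a b ↔
            (a ≠ b ∧ ((a ∈ U1 ∧ b ∈ U1) ∨ (a ∈ U2 ∧ b ∈ U2))))) :
    ∀ k : ℕ, 4 ≤ k → k ≤ n - 1 →
      IsRainbowPathOn G (Finset.Icc 1 (n - 1)) Set.univ k x y := by
  classical
  intro k hk4 hkn
  obtain ⟨j, hj, U1, U2, hUnion, hDisj, hcard1, hcard2, hKK⟩ := hsplit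
  rw [Finset.mem_Icc] at hj
  have hsub1 : U1 ⊆ (({x, y, z} : Set V)ᶜ) := hUnion ▸ Set.subset_union_left
  have hsub2 : U2 ⊆ (({x, y, z} : Set V)ᶜ) := hUnion ▸ Set.subset_union_right
  have hxnot : x ∉ U1 ∪ U2 := by rw [hUnion]; simp
  have hynot : y ∉ U1 ∪ U2 := by rw [hUnion]; simp
  have hznot : z ∉ U1 ∪ U2 := by rw [hUnion]; simp
  -- closure of the two parts under adjacency within the complement
  have clos1 : ∀ i, 1 ≤ i → i ≤ n - 2 → i ≠ j → ∀ a b : V, a ∈ U1 →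
      b ∈ (({x, y, z} : Set V)ᶜ) → (G i).Adj a b → b ∈ U1 := by
    intro i h1 h2 hij a b ha hb hadj
    rcases (hKK i (Finset.mem_Icc.mpr ⟨h1, h2⟩) hij a b (hsub1 ha) hb).mp hadj with
      ⟨-, ⟨-, hb1⟩ | ⟨ha2, -⟩⟩
    · exact hb1
    · exact (Set.disjoint_left.mp hDisj ha ha2).elim
  have clos2 : ∀ i, 1 ≤ i → i ≤ n - 2 → i ≠ j → ∀ a b : V, a ∈ U2 →
      b ∈ (({x, y, z} : Set V)ᶜ) → (G i).Adj a b → b ∈ U2 := by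
    intro i h1 h2 hij a b ha hb hadj
    rcases (hKK i (Finset.mem_Icc.mpr ⟨h1, h2⟩) hij a b (hsub2 ha) hb).mp hadj with
      ⟨-, ⟨ha1, -⟩ | ⟨-, hb2⟩⟩
    · exact (Set.disjoint_left.mp hDisj ha1 ha).elim
    · exact hb2
  have hxyz3 : ({x, y, z} : Set V).ncard ≤ 3 := by
    have h1' := Set.ncard_insert_le x ({y, z} : Set V)
    have h2' := Set.ncard_insert_le y ({z} : Set V)
    have h3' := Set.ncard_singleton z
    omega
  -- each vertex of U1 ∪ U2 is adjacent to x, y, z in every G i, i ≠ j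
  have core : ∀ (W : Set V), 2 * W.ncard = n - 3 →
      (∀ i, 1 ≤ i → i ≤ n - 2 → i ≠ j → ∀ a b : V, a ∈ W →
        b ∈ (({x, y, z} : Set V)ᶜ) → (G i).Adj a b → b ∈ W) →
      ∀ i, 1 ≤ i → i ≤ n - 2 → i ≠ j → ∀ v ∈ W, ∀ w ∈ ({x, y, z} : Set V),
        (G i).Adj v w := by
    intro W hW hclos i h1 h2 hij v hv w hw
    by_contra hadj
    have hsubN : (G i).neighborSet v ⊆ (W \ {v}) ∪ (({x, y, z} : Set V) \ {w}) := by
      intro u hu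
      have hu' : (G i).Adj v u := hu
      by_cases hmem : u ∈ ({x, y, z} : Set V)
      · right
        refine ⟨hmem, ?_⟩
        simp only [Set.mem_singleton_iff]
        rintro rfl; exact hadj hu'
      · left
        refine ⟨hclos i h1 h2 hij v u hv hmem hu', ?_⟩
        simp only [Set.mem_singleton_iff]
        rintro rfl; exact (G i).irrefl hu'
    have hle := Set.ncard_le_ncard hsubN (Set.toFinite _)
    have hle2 := Set.ncard_union_le (W \ {v}) (({x, y, z} : Set V) \ {w})
    have hWv : (W \ {v}).ncard = W.ncard - 1 := Set.ncard_diff_singleton_of_mem hv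
    have hdw : (({x, y, z} : Set V) \ {w}).ncard = ({x, y, z} : Set V).ncard - 1 :=
      Set.ncard_diff_singleton_of_mem hw
    have hdegv := hdeg i (Finset.mem_Icc.mpr ⟨h1, by omega⟩) v
    omega
  have L1 : ∀ i, 1 ≤ i → i ≤ n - 2 → i ≠ j → ∀ v, v ∈ U1 ∪ U2 →
      (G i).Adj v x ∧ (G i).Adj v y ∧ (G i).Adj v z := by
    intro i h1 h2 hij v hv
    have hcore : ∀ w ∈ ({x, y, z} : Set V), (G i).Adj v w := by
      rcases hv with hv | hv
      · exact fun w hw => core U1 hcard1 clos1 i h1 h2 hij v hv w hw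
      · exact fun w hw => core U2 hcard2 clos2 i h1 h2 hij v hv w hw
    exact ⟨hcore x (by simp), hcore y (by simp), hcore z (by simp)⟩
  -- x has a G_{n-1}-neighbour in U1
  have L2 : ∃ a, a ∈ U1 ∧ (G (n - 1)).Adj x a := by
    by_contra hno
    push_neg at hno
    have hsubN : (G (n - 1)).neighborSet x ⊆ U2 ∪ {y} := by
      intro u hu
      have hu' : (G (n - 1)).Adj x u := hu
      by_cases hmem : u ∈ ({x, y, z} : Set V)
      · right
        simp only [Set.mem_insert_iff, Set.mem_singleton_iff] at hmem
        rcases hmem with rfl | rfl | rfl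
        · exact ((G (n - 1)).irrefl hu').elim
        · simp
        · exact (hxz hu').elim
      · have : u ∈ U1 ∪ U2 := by rw [hUnion]; exact hmem
        rcases this with h | h
        · exact (hno u h hu').elim
        · exact Or.inl h
    have hle := Set.ncard_le_ncard hsubN (Set.toFinite _)
    have hle2 := Set.ncard_union_le U2 ({y} : Set V)
    have hy1 := Set.ncard_singleton y
    have hdegv := hdeg (n - 1) (Finset.mem_Icc.mpr ⟨by omega, le_refl _⟩) x
    omega
  obtain ⟨a0, ha0U, ha0adj⟩ := L2
  obtain ⟨f, hf1, hf2, hf3⟩ := set_enum' U1 ⟨a0, ha0U⟩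
  obtain ⟨i0, hi0, hfi0⟩ := hf3 a0 ha0U
  have hU2ne : U2.Nonempty := Set.nonempty_of_ncard_ne_zero (by omega)
  obtain ⟨B0, hB01, hB02, -⟩ := set_enum' U2 hU2ne
  set m := U1.ncard with hmdef
  have hm : 2 * m = n - 3 := hcard1
  have hm2 : 2 ≤ m := by omega
  have hU2m : U2.ncard = m := by omega
  -- the U1-enumeration, rearranged so that A 0 = a0
  set A : ℕ → V := fun t => f ((Equiv.swap 0 i0) t) with hAdef
  have hswaplt : ∀ t, t < m → (Equiv.swap (0 : ℕ) i0) t < m := by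
    intro t ht
    rw [Equiv.swap_apply_def]
    split_ifs <;> omega
  have hA1 : ∀ t, t < m → A t ∈ U1 := fun t ht => hf1 _ (hswaplt t ht)
  have hAinj : ∀ s t, s < m → t < m → A s = A t → s = t := by
    intro s t hs ht h
    exact (Equiv.swap 0 i0).injective (hf2 _ _ (hswaplt s hs) (hswaplt t ht) h)
  have hA0 : A 0 = a0 := by
    show f ((Equiv.swap 0 i0) 0) = a0
    rw [Equiv.swap_apply_left]; exact hfi0
  set B : ℕ → V := B0 with hBdef
  have hB1 : ∀ t, t < m → B t ∈ U2 := fun t ht => hB01 t (by omega)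
  have hBinj : ∀ s t, s < m → t < m → B s = B t → s = t :=
    fun s t hs ht h => hB02 s t (by omega) (by omega) h
  -- distinctness helpers
  have nxA : ∀ t, t < m → x ≠ A t := by
    intro t ht h; exact hxnot (Or.inl (by rw [h]; exact hA1 t ht))
  have nyA : ∀ t, t < m → y ≠ A t := by
    intro t ht h; exact hynot (Or.inl (by rw [h]; exact hA1 t ht))
  have nzA : ∀ t, t < m → z ≠ A t := by
    intro t ht h; exact hznot (Or.inl (by rw [h]; exact hA1 t ht))
  have nxB : ∀ t, t < m → x ≠ B t := by
    intro t ht h; exact hxnot (Or.inr (by rw [h]; exact hB1 t ht))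
  have nyB : ∀ t, t < m → y ≠ B t := by
    intro t ht h; exact hynot (Or.inr (by rw [h]; exact hB1 t ht))
  have nzB : ∀ t, t < m → z ≠ B t := by
    intro t ht h; exact hznot (Or.inr (by rw [h]; exact hB1 t ht))
  have nB1 : ∀ t, t < m → B t ∉ U1 :=
    fun t ht hmem => Set.disjoint_left.mp hDisj hmem (hB1 t ht)
  -- the colours
  set c : ℕ → ℕ := fun i => if i = 0 then n - 1 else if i < j then i else i + 1 with hcdef
  have hc0 : c 0 = n - 1 := by simp [hcdef]
  have hcval : ∀ i, 1 ≤ i → i ≤ n - 3 → (1 ≤ c i ∧ c i ≤ n - 2 ∧ c i ≠ j) := by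
    intro i h1 h2
    simp only [hcdef]
    split_ifs <;> omega
  have hcinj : ∀ i i', i < n - 2 → i' < n - 2 → c i = c i' → i = i' := by
    intro i i' hi hi' h
    simp only [hcdef] at h
    split_ifs at h <;> omega
  have hcmem : ∀ i, i + 1 < k → c i ∈ Finset.Icc 1 (n - 1) := by
    intro i hi
    rw [Finset.mem_Icc]
    rcases Nat.eq_zero_or_pos i with rfl | hpos
    · rw [hc0]; omega
    · have := hcval i hpos (by omega)
      omega
  have hcinj' : ∀ i i', i + 1 < k → i' + 1 < k → c i = c i' → i = i' :=
    fun i i' hi hi' h => hcinj i i' (by omega) (by omega) h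
  -- the tag function
  set tg : V → ℕ := fun v => if v = x then 0 else if v ∈ U1 then 1 else if v = z then 2
    else if v ∈ U2 then 3 else 4 with htgdef
  have tgx : tg x = 0 := by simp [htgdef]
  have tgA : ∀ t, t < m → tg (A t) = 1 := by
    intro t ht
    simp only [htgdef]
    rw [if_neg (nxA t ht).symm, if_pos (hA1 t ht)]
  have tgz : tg z = 2 := by
    simp only [htgdef]
    rw [if_neg hzx, if_neg (fun h => hznot (Or.inl h))]; simp
  have tgB : ∀ t, t < m → tg (B t) = 3 := by
    intro t ht
    simp only [htgdef]
    rw [if_neg (nxB t ht).symm, if_neg (nB1 t ht), if_neg (nzB t ht).symm, if_pos (hB1 t ht)]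
  have tgy : tg y = 4 := by
    simp only [htgdef]
    rw [if_neg hxy.symm, if_neg (fun h => hynot (Or.inl h)), if_neg hzy.symm,
      if_neg (fun h => hynot (Or.inr h))]
  by_cases hcaseA : k ≤ m + 2
  · -- short path: x, A 0, …, A (k-3), y
    set u : ℕ → V := fun i => if i = 0 then x else if i = k - 1 then y else A (i - 1) with hudef
    have hu0 : u 0 = x := by simp [hudef]
    have huk : u (k - 1) = y := by
      simp only [hudef]
      rw [if_neg (by omega)]; simp
    have huA : ∀ i, 1 ≤ i → i ≤ k - 2 → u i = A (i - 1) := by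
      intro i h1 h2
      simp only [hudef]
      rw [if_neg (by omega), if_neg (by omega)]
    set sg : ℕ → ℕ := fun i => if i = 0 then 0 else if i = k - 1 then 4 else 1 with hsgdef
    have hseg : ∀ i, i < k → tg (u i) = sg i := by
      intro i hi
      rcases (show i = 0 ∨ i = k - 1 ∨ (1 ≤ i ∧ i ≤ k - 2) by omega) with rfl | rfl | hmid
      · rw [hu0, tgx]; simp [hsgdef]
      · rw [huk, tgy]; simp only [hsgdef]; rw [if_neg (by omega)]; simp
      · rw [huA i hmid.1 hmid.2, tgA _ (by omega)]
        simp only [hsgdef]; rw [if_neg (by omega), if_neg (by omega)]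
    refine ⟨u, c, fun i _ => Set.mem_univ _, ?_, hcmem, hcinj', by omega, hu0, huk, ?_⟩
    · intro i i' hi hi' h
      have hsegeq : sg i = sg i' := by rw [← hseg i hi, ← hseg i' hi', h]
      simp only [hsgdef] at hsegeq
      split_ifs at hsegeq <;> first
        | omega
        | (rw [huA i (by omega) (by omega), huA i' (by omega) (by omega)] at h
           have := hAinj _ _ (by omega) (by omega) h
           omega)
    · intro i hi
      rcases (show i = 0 ∨ (1 ≤ i ∧ i ≤ k - 3) ∨ i = k - 2 by omega) with rfl | hmid | rfl
      · show (G (c 0)).Adj (u 0) (u 1)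
        rw [hu0, huA 1 le_rfl (by omega), hc0]
        show (G (n - 1)).Adj x (A (1 - 1))
        rw [show (1 : ℕ) - 1 = 0 from rfl, hA0]
        exact ha0adj
      · rw [huA i hmid.1 (by omega), huA (i + 1) (by omega) (by omega)]
        have hc := hcval i (by omega) (by omega)
        refine (hKK (c i) (Finset.mem_Icc.mpr ⟨hc.1, hc.2.1⟩) hc.2.2 _ _
          (hsub1 (hA1 _ (by omega))) (hsub1 (hA1 _ (by omega)))).mpr
          ⟨fun hh => ?_, Or.inl ⟨hA1 _ (by omega), hA1 _ (by omega)⟩⟩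
        have := hAinj _ _ (by omega) (by omega) hh
        omega
      · rw [show k - 2 + 1 = k - 1 by omega, huk, huA (k - 2) (by omega) (by omega)]
        have hc := hcval (k - 2) (by omega) (by omega)
        exact (L1 (c (k - 2)) hc.1 hc.2.1 hc.2.2 _ (Or.inl (hA1 _ (by omega)))).2.1
  · -- long path: x, A 0, …, A (m-2), z, B 0, …, B (k-3-m), y
    have hkB : m + 3 ≤ k := by omega
    have hk2m : k ≤ 2 * m + 2 := by omega
    set u : ℕ → V := fun i => if i = 0 then x else if i < m then A (i - 1) else if i = m then z
      else if i = k - 1 then y else B (i - m - 1) with hudef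
    have hu0 : u 0 = x := by simp [hudef]
    have huA : ∀ i, 1 ≤ i → i ≤ m - 1 → u i = A (i - 1) := by
      intro i h1 h2
      simp only [hudef]
      rw [if_neg (by omega), if_pos (by omega)]
    have huz : u m = z := by
      simp only [hudef]
      rw [if_neg (by omega), if_neg (by omega)]; simp
    have huB : ∀ i, m + 1 ≤ i → i ≤ k - 2 → u i = B (i - m - 1) := by
      intro i h1 h2
      simp only [hudef]
      rw [if_neg (by omega), if_neg (by omega), if_neg (by omega), if_neg (by omega)]
    have huk : u (k - 1) = y := by
      simp only [hudef]
      rw [if_neg (by omega), if_neg (by omega), if_neg (by omega)]; simp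
    set sg : ℕ → ℕ := fun i => if i = 0 then 0 else if i < m then 1 else if i = m then 2
      else if i = k - 1 then 4 else 3 with hsgdef
    have hseg : ∀ i, i < k → tg (u i) = sg i := by
      intro i hi
      rcases (show i = 0 ∨ (1 ≤ i ∧ i ≤ m - 1) ∨ i = m ∨ (m + 1 ≤ i ∧ i ≤ k - 2) ∨ i = k - 1
        by omega) with rfl | hA' | rfl | hB' | rfl
      · rw [hu0, tgx]; simp [hsgdef]
      · rw [huA i hA'.1 hA'.2, tgA _ (by omega)]
        simp only [hsgdef]; rw [if_neg (by omega), if_pos (by omega)]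
      · rw [huz, tgz]
        simp only [hsgdef]; rw [if_neg (by omega), if_neg (by omega)]; simp
      · rw [huB i hB'.1 hB'.2, tgB _ (by omega)]
        simp only [hsgdef]
        rw [if_neg (by omega), if_neg (by omega), if_neg (by omega), if_neg (by omega)]
      · rw [huk, tgy]
        simp only [hsgdef]
        rw [if_neg (by omega), if_neg (by omega), if_neg (by omega)]; simp
    refine ⟨u, c, fun i _ => Set.mem_univ _, ?_, hcmem, hcinj', by omega, hu0, huk, ?_⟩
    · intro i i' hi hi' h
      have hsegeq : sg i = sg i' := by rw [← hseg i hi, ← hseg i' hi', h]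
      simp only [hsgdef] at hsegeq
      split_ifs at hsegeq <;> first
        | omega
        | (rw [huA i (by omega) (by omega), huA i' (by omega) (by omega)] at h
           have := hAinj _ _ (by omega) (by omega) h
           omega)
        | (rw [huB i (by omega) (by omega), huB i' (by omega) (by omega)] at h
           have := hBinj _ _ (by omega) (by omega) h
           omega)
    · intro i hi
      rcases (show i = 0 ∨ (1 ≤ i ∧ i ≤ m - 2) ∨ i = m - 1 ∨ i = m ∨
        (m + 1 ≤ i ∧ i ≤ k - 3) ∨ i = k - 2 by omega) with rfl | hA' | rfl | rfl | hB' | rfl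
      · show (G (c 0)).Adj (u 0) (u 1)
        rw [hu0, huA 1 le_rfl (by omega), hc0]
        show (G (n - 1)).Adj x (A (1 - 1))
        rw [show (1 : ℕ) - 1 = 0 from rfl, hA0]
        exact ha0adj
      · rw [huA i hA'.1 (by omega), huA (i + 1) (by omega) (by omega)]
        have hc := hcval i (by omega) (by omega)
        refine (hKK (c i) (Finset.mem_Icc.mpr ⟨hc.1, hc.2.1⟩) hc.2.2 _ _
          (hsub1 (hA1 _ (by omega))) (hsub1 (hA1 _ (by omega)))).mpr
          ⟨fun hh => ?_, Or.inl ⟨hA1 _ (by omega), hA1 _ (by omega)⟩⟩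
        have := hAinj _ _ (by omega) (by omega) hh
        omega
      · rw [show m - 1 + 1 = m by omega, huz, huA (m - 1) (by omega) (by omega)]
        have hc := hcval (m - 1) (by omega) (by omega)
        exact (L1 (c (m - 1)) hc.1 hc.2.1 hc.2.2 _ (Or.inl (hA1 _ (by omega)))).2.2
      · rw [huz, huB (m + 1) le_rfl (by omega)]
        have hc := hcval m (by omega) (by omega)
        exact ((L1 (c m) hc.1 hc.2.1 hc.2.2 _ (Or.inr (hB1 _ (by omega)))).2.2).symm
      · rw [huB i hB'.1 (by omega), huB (i + 1) (by omega) (by omega)]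
        have hc := hcval i (by omega) (by omega)
        refine (hKK (c i) (Finset.mem_Icc.mpr ⟨hc.1, hc.2.1⟩) hc.2.2 _ _
          (hsub2 (hB1 _ (by omega))) (hsub2 (hB1 _ (by omega)))).mpr
          ⟨fun hh => ?_, Or.inr ⟨hB1 _ (by omega), hB1 _ (by omega)⟩⟩
        have := hBinj _ _ (by omega) (by omega) hh
        omega
      · rw [show k - 2 + 1 = k - 1 by omega, huk, huB (k - 2) (by omega) (by omega)]
        have hc := hcval (k - 2) (by omega) (by omega)
        exact (L1 (c (k - 2)) hc.1 hc.2.1 hc.2.2 _ (Or.inr (hB1 _ (by omega)))).2.1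
end

section
/- Assume the Cycle Setup. Then A ∩ B = ∅ and |A| = |B| = (n−5)/2. -/
set_option autoImplicit false

set_option maxHeartbeats 1000000


private lemma mod_cancel {m a b x : ℕ} (ha : a < m) (hb : b < m)
    (h : (x + a) % m = (x + b) % m) : a = b := by
  have h1 : a % m = b % m := Nat.ModEq.add_left_cancel' x h
  rwa [Nat.mod_eq_of_lt ha, Nat.mod_eq_of_lt hb] at h1

private lemma u_per {V : Type*} (m : ℕ) (u : ℕ → V) (hper : ∀ i, u (i + m) = u i) :
    ∀ a k, u (a + k * m) = u a := by
  intro a k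
  induction k with
  | zero => simp
  | succ k ih =>
    have h : a + (k + 1) * m = (a + k * m) + m := by ring
    rw [h, hper, ih]

private lemma u_r {V : Type*} (m : ℕ) (u : ℕ → V) (hper : ∀ i, u (i + m) = u i)
    (t : ℕ) (ht : 1 ≤ t) : u ((t - 1) % m + 1) = u t := by
  have h1 : (t - 1) % m + (t - 1) / m * m = t - 1 := Nat.mod_add_div' (t - 1) m
  have h2 : ((t - 1) % m + 1) + (t - 1) / m * m = t := by omega
  calc u ((t - 1) % m + 1) = u (((t - 1) % m + 1) + (t - 1) / m * m) :=
        (u_per m u hper _ _).symm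
    _ = u t := by rw [h2]

private lemma exists_shift (m t j : ℕ) (hm : 0 < m) (hj1 : 1 ≤ j) (hjm : j ≤ m) :
    ∃ i, i < m ∧ (t + i) % m = j - 1 := by
  refine ⟨(j - 1 + m - t % m) % m, Nat.mod_lt _ hm, ?_⟩
  have h1 : t % m < m := Nat.mod_lt _ hm
  have h2 : t % m + m * (t / m) = t := Nat.mod_add_div t m
  have h3 : m * (1 + t / m) = m + m * (t / m) := by ring
  rw [Nat.add_mod_mod]
  have h4 : t + (j - 1 + m - t % m) = j - 1 + m * (1 + t / m) := by omega
  rw [h4, Nat.add_mul_mod_self_left, Nat.mod_eq_of_lt (by omega)]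

private lemma orbit_all (m : ℕ) (hm : 0 < m) (hodd : Odd m) (A : Set ℕ)
    (hclosed : ∀ s ∈ A, ((s + 1) % m + 1) ∈ A)
    (a : ℕ) (ha : a ∈ A) (haI : 1 ≤ a) (haM : a ≤ m) :
    ∀ j, 1 ≤ j → j ≤ m → j ∈ A := by
  have iter : ∀ k, ((a - 1 + 2 * k) % m + 1) ∈ A := by
    intro k
    induction k with
    | zero =>
      have : (a - 1 + 2 * 0) % m = a - 1 := by
        rw [Nat.mul_zero, Nat.add_zero, Nat.mod_eq_of_lt (by omega)]
      rw [this]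
      have : a - 1 + 1 = a := by omega
      rwa [this]
    | succ k ih =>
      have h0 := hclosed _ ih
      have h1 : (a - 1 + 2 * k) % m + 1 + 1 = (a - 1 + 2 * k) % m + 2 := by omega
      rw [h1, Nat.mod_add_mod] at h0
      have h2 : a - 1 + 2 * k + 2 = a - 1 + 2 * (k + 1) := by omega
      rwa [h2] at h0
  intro j hj1 hjm
  obtain ⟨p, hp⟩ := hodd
  set t' := j - 1 + m - (a - 1) % m with ht'
  have hkey : (a - 1 + 2 * ((m + 1) / 2 * t')) % m = j - 1 := by
    have hh : (m + 1) / 2 = p + 1 := by omega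
    have h2 : 2 * ((m + 1) / 2 * t') = (m + 1) * t' := by rw [hh, hp]; ring
    have h5 : (a - 1) % m + m * ((a - 1) / m) = a - 1 := Nat.mod_add_div (a - 1) m
    have h6 : (a - 1) % m < m := Nat.mod_lt _ hm
    have h7 : m * (1 + (a - 1) / m + t') = m + m * ((a - 1) / m) + m * t' := by ring
    have h8 : (m + 1) * t' = t' + m * t' := by ring
    have h9 : a - 1 + 2 * ((m + 1) / 2 * t') = j - 1 + m * (1 + (a - 1) / m + t') := by omega
    rw [h9, Nat.add_mul_mod_self_left, Nat.mod_eq_of_lt (by omega)]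
  have := iter ((m + 1) / 2 * t')
  rw [hkey] at this
  have hj : j - 1 + 1 = j := by omega
  rwa [hj] at this

private lemma covering {V : Type*} [Fintype V] (n : ℕ) (hn : 7 ≤ n)
    (hV : Fintype.card V = n)
    (x y z : V) (hxy : x ≠ y) (hzx : z ≠ x) (hzy : z ≠ y)
    (u : ℕ → V) (w : V)
    (hu_mem : ∀ i ∈ Finset.Icc 1 (n - 4), u i ∈ (({x, y, z} : Set V)ᶜ))
    (hu_inj : ∀ i ∈ Finset.Icc 1 (n - 4), ∀ j ∈ Finset.Icc 1 (n - 4), u i = u j → i = j)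
    (hw_mem : w ∈ (({x, y, z} : Set V)ᶜ))
    (hw_notC : ∀ i ∈ Finset.Icc 1 (n - 4), u i ≠ w) :
    ∀ v : V, v ∈ (({x, y, z} : Set V)ᶜ) →
      v = w ∨ ∃ i ∈ Finset.Icc 1 (n - 4), u i = v := by
  have hinj : Set.InjOn u ↑(Finset.Icc 1 (n - 4)) := by
    intro a ha b hb h
    exact hu_inj a (by exact_mod_cast ha) b (by exact_mod_cast hb) h
  have hwni : w ∉ u '' ↑(Finset.Icc 1 (n - 4)) := by
    rintro ⟨i, hi, rfl⟩
    exact hw_notC i (by exact_mod_cast hi) rfl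
  have hUcard : (insert w (u '' ↑(Finset.Icc 1 (n - 4)))).ncard = (n - 4) + 1 := by
    rw [Set.ncard_insert_of_notMem hwni ((Finset.finite_toSet _).image u),
        Set.ncard_image_of_injOn hinj, Set.ncard_coe_finset, Nat.card_Icc]
    omega
  have hxyz : ({x, y, z} : Set V).ncard = 3 := by
    rw [Set.ncard_insert_of_notMem (by simp [hxy, hzx.symm]) (Set.toFinite _),
        Set.ncard_insert_of_notMem (by simp [hzy.symm]) (Set.toFinite _),
        Set.ncard_singleton]
  have hS : (({x, y, z} : Set V)ᶜ).ncard = n - 3 := by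
    have h := Set.ncard_add_ncard_compl ({x, y, z} : Set V)
    rw [Nat.card_eq_fintype_card, hV, hxyz] at h
    omega
  have hsub : insert w (u '' ↑(Finset.Icc 1 (n - 4))) ⊆ (({x, y, z} : Set V)ᶜ) := by
    rintro v hv
    rcases Set.mem_insert_iff.mp hv with rfl | ⟨i, hi, rfl⟩
    · exact hw_mem
    · exact hu_mem i (by exact_mod_cast hi)
  have heq : insert w (u '' ↑(Finset.Icc 1 (n - 4))) = (({x, y, z} : Set V)ᶜ) :=
    Set.eq_of_subset_of_ncard_le hsub (by rw [hUcard, hS]; omega) (Set.toFinite _)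
  intro v hv
  rw [← heq] at hv
  rcases Set.mem_insert_iff.mp hv with rfl | ⟨i, hi, rfl⟩
  · exact Or.inl rfl
  · exact Or.inr ⟨i, by exact_mod_cast hi, rfl⟩

private lemma key_no_insert {V : Type*} [Fintype V] (n : ℕ) (hn : 7 ≤ n)
    (hV : Fintype.card V = n) (G : ℕ → SimpleGraph V)
    (x y z : V) (hxy : x ≠ y) (hzx : z ≠ x) (hzy : z ≠ y)
    (hnoham : ∀ j ∈ Finset.Icc 1 (n - 2),
      ¬ HasRainbowHamCycleOn G (Finset.Icc 1 (n - 2) \ {j})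
        (({x, y, z} : Set V)ᶜ) (n - 3))
    (u : ℕ → V) (w : V)
    (hper : ∀ i, u (i + (n - 4)) = u i)
    (hu_mem : ∀ i ∈ Finset.Icc 1 (n - 4), u i ∈ (({x, y, z} : Set V)ᶜ))
    (hu_inj : ∀ i ∈ Finset.Icc 1 (n - 4), ∀ j ∈ Finset.Icc 1 (n - 4), u i = u j → i = j)
    (hadj : ∀ i ∈ Finset.Icc 1 (n - 4), (G i).Adj (u i) (u (i + 1)))
    (hw_mem : w ∈ (({x, y, z} : Set V)ᶜ))
    (hw_notC : ∀ i ∈ Finset.Icc 1 (n - 4), u i ≠ w)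
    (t : ℕ) (ht : 1 ≤ t) (c₁ c₂ : ℕ)
    (hc₁ : c₁ = n - 3 ∨ c₁ = n - 2) (hc₂ : c₂ = n - 3 ∨ c₂ = n - 2) (hcc : c₁ ≠ c₂)
    (h1 : (G c₁).Adj w (u t)) (h2 : (G c₂).Adj w (u (t + 1))) : False := by
  set m := n - 4 with hmdef
  have hm : 0 < m := by omega
  have hm3 : 3 ≤ m := by omega
  -- basic facts about reduced indices
  have hur : ∀ s, 1 ≤ s → u ((s - 1) % m + 1) = u s := fun s hs => u_r m u hper s hs
  have hrmem : ∀ s, (s - 1) % m + 1 ∈ Finset.Icc 1 m := by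
    intro s
    have := Nat.mod_lt (s - 1) hm
    simp only [Finset.mem_Icc]
    omega
  have humem : ∀ s, 1 ≤ s → u s ∈ (({x, y, z} : Set V)ᶜ) := by
    intro s hs
    rw [← hur s hs]
    exact hu_mem _ (hrmem s)
  have huw : ∀ s, 1 ≤ s → u s ≠ w := by
    intro s hs
    rw [← hur s hs]
    exact hw_notC _ (hrmem s)
  have huadj : ∀ s, 1 ≤ s → (G ((s - 1) % m + 1)).Adj (u s) (u (s + 1)) := by
    intro s hs
    have h0 := hadj _ (hrmem s)
    have hd : (s - 1) % m + (s - 1) / m * m = s - 1 := Nat.mod_add_div' (s - 1) m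
    have e2 : u ((s - 1) % m + 1 + 1) = u (s + 1) := by
      have he : ((s - 1) % m + 1 + 1) + (s - 1) / m * m = s + 1 := by omega
      calc u ((s - 1) % m + 1 + 1)
          = u (((s - 1) % m + 1 + 1) + (s - 1) / m * m) := (u_per m u hper _ _).symm
        _ = u (s + 1) := by rw [he]
    rwa [hur s hs, e2] at h0
  -- the target index to exclude
  apply hnoham ((t - 1) % m + 1)
    (by have := Nat.mod_lt (t - 1) hm; simp only [Finset.mem_Icc]; omega)
  have hl : n - 3 = m + 1 := by omega
  rw [hl]
  refine ⟨fun i => if i = m then w else u (t + 1 + i),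
      fun i => if i < m - 1 then (t + 1 + i - 1) % m + 1 else if i = m - 1 then c₁ else c₂,
      ?_, ?_, ?_, ?_, by omega, ?_⟩
  · -- injectivity of vertices
    intro i j hi hj hij
    beta_reduce at hij
    by_cases hiM : i = m <;> by_cases hjM : j = m
    · omega
    · rw [if_pos hiM, if_neg hjM] at hij
      exact absurd hij.symm (huw (t + 1 + j) (by omega))
    · rw [if_neg hiM, if_pos hjM] at hij
      exact absurd hij (huw (t + 1 + i) (by omega))
    · rw [if_neg hiM, if_neg hjM] at hij
      rw [← hur (t + 1 + i) (by omega), ← hur (t + 1 + j) (by omega)] at hij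
      have := hu_inj _ (hrmem (t + 1 + i)) _ (hrmem (t + 1 + j)) hij
      have hti : t + 1 + i - 1 = t + i := by omega
      have htj : t + 1 + j - 1 = t + j := by omega
      rw [hti, htj] at this
      have hm2 : (t + i) % m = (t + j) % m := by omega
      exact mod_cancel (by omega) (by omega) hm2
  · -- coverage
    intro v
    constructor
    · intro hv
      rcases covering n hn hV x y z hxy hzx hzy u w hu_mem hu_inj hw_mem hw_notC v hv with
        rfl | ⟨j, hj, hju⟩
      · exact ⟨m, by omega, by beta_reduce; exact if_pos rfl⟩
      · simp only [Finset.mem_Icc] at hj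
        obtain ⟨i, hi, hmod⟩ := exists_shift m (t + 1 - 1) j hm hj.1 hj.2
        refine ⟨i, by omega, ?_⟩
        beta_reduce
        rw [if_neg (by omega)]
        rw [← hur (t + 1 + i) (by omega)]
        have he : t + 1 + i - 1 = t + 1 - 1 + i := by omega
        rw [he, hmod]
        have hj1 : j - 1 + 1 = j := by omega
        rw [hj1, hju]
    · rintro ⟨i, hi, rfl⟩
      beta_reduce
      by_cases hiM : i = m
      · rw [if_pos hiM]; exact hw_mem
      · rw [if_neg hiM]; exact humem _ (by omega)
  · -- colors in allowed set
    intro i hi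
    beta_reduce
    by_cases h1i : i < m - 1
    · rw [if_pos h1i]
      simp only [Finset.mem_sdiff, Finset.mem_Icc, Finset.mem_singleton]
      have hlt := Nat.mod_lt (t + 1 + i - 1) hm
      refine ⟨⟨by omega, by omega⟩, ?_⟩
      intro hcontra
      have hmodeq : (t + 1 + i - 1) % m = (t - 1) % m := by omega
      have he1 : t + 1 + i - 1 = (t - 1) + (i + 1) := by omega
      have he2 : t - 1 = (t - 1) + 0 := by omega
      rw [he1] at hmodeq
      rw [he2] at hmodeq  -- careful: rewrites on RHS occurrence
      have := mod_cancel (m := m) (a := i + 1) (b := 0) (by omega) (by omega) hmodeq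
      omega
    · rw [if_neg h1i]
      by_cases h2i : i = m - 1
      · rw [if_pos h2i]
        simp only [Finset.mem_sdiff, Finset.mem_Icc, Finset.mem_singleton]
        have := Nat.mod_lt (t - 1) hm
        omega
      · rw [if_neg h2i]
        simp only [Finset.mem_sdiff, Finset.mem_Icc, Finset.mem_singleton]
        have := Nat.mod_lt (t - 1) hm
        omega
  · -- color injectivity
    intro i j hi hj hij
    beta_reduce at hij
    have hlti := Nat.mod_lt (t + 1 + i - 1) hm
    have hltj := Nat.mod_lt (t + 1 + j - 1) hm
    by_cases h1i : i < m - 1 <;> by_cases h1j : j < m - 1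
    · rw [if_pos h1i, if_pos h1j] at hij
      have hmodeq : (t + 1 + i - 1) % m = (t + 1 + j - 1) % m := by omega
      have hei : t + 1 + i - 1 = t + i := by omega
      have hej : t + 1 + j - 1 = t + j := by omega
      rw [hei, hej] at hmodeq
      exact mod_cancel (by omega) (by omega) hmodeq
    · rw [if_pos h1i, if_neg h1j] at hij
      by_cases h2j : j = m - 1 <;> simp only [h2j, if_true, if_false, if_pos, if_neg] at hij <;> omega
    · rw [if_neg h1i, if_pos h1j] at hij
      by_cases h2i : i = m - 1 <;> simp only [h2i, if_true, if_false] at hij <;> omega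
    · rw [if_neg h1i, if_neg h1j] at hij
      by_cases h2i : i = m - 1 <;> by_cases h2j : j = m - 1 <;>
        simp only [h2i, h2j, if_true, if_false] at hij <;> omega
  · -- adjacency
    intro i hi
    beta_reduce
    by_cases h1i : i < m - 1
    · rw [if_pos h1i]
      have hmod : (i + 1) % (m + 1) = i + 1 := Nat.mod_eq_of_lt (by omega)
      rw [hmod, if_neg (by omega : ¬ i = m), if_neg (by omega : ¬ i + 1 = m)]
      have := huadj (t + 1 + i) (by omega)
      have he : t + 1 + i + 1 = t + 1 + (i + 1) := by omega
      rwa [he] at this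
    · by_cases h2i : i = m - 1
      · subst h2i
        rw [if_neg h1i, if_pos rfl]
        have hmod : (m - 1 + 1) % (m + 1) = m := by
          rw [Nat.mod_eq_of_lt (by omega)]; omega
        rw [hmod, if_pos rfl, if_neg (by omega : ¬ m - 1 = m)]
        have he : t + 1 + (m - 1) = t + m := by omega
        rw [he]
        have hp : u (t + m) = u t := hper t
        rw [hp]
        exact h1.symm
      · have hiM : i = m := by omega
        subst hiM
        rw [if_neg h1i, if_neg (by omega : ¬ m = m - 1), if_pos rfl]
        have hmod : (m + 1) % (m + 1) = 0 := Nat.mod_self _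
        rw [hmod, if_neg (by omega : ¬ (0:ℕ) = m)]
        have he : t + 1 + 0 = t + 1 := by omega
        rw [he]
        exact h2

/-- Claim: sizes of A and B. Under the Cycle Setup,
`A ∩ B = ∅` and `|A| = |B| = (n-5)/2`. -/
theorem statement15
{V : Type*} [Fintype V] (n : ℕ) (hn : 7 ≤ n) (hodd : Odd n)
    (hV : Fintype.card V = n) (G : ℕ → SimpleGraph V)
    (hdeg : ∀ i ∈ Finset.Icc 1 (n - 1), ∀ v : V,
      n + 1 ≤ 2 * ((G i).neighborSet v).ncard)
    (x y z : V) (hxy : x ≠ y) (hzx : z ≠ x) (hzy : z ≠ y)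
    (hxz : ¬ (G (n - 1)).Adj x z)
    (hnoham : ∀ j ∈ Finset.Icc 1 (n - 2),
      ¬ HasRainbowHamCycleOn G (Finset.Icc 1 (n - 2) \ {j})
        (({x, y, z} : Set V)ᶜ) (n - 3))
    -- the rainbow (n-4)-cycle C = u 1 u 2 ⋯ u (n-4) u 1 in 𝐇_{n-2},
    -- with u extended periodically modulo n - 4
    (u : ℕ → V) (w : V)
    (hper : ∀ i, u (i + (n - 4)) = u i)
    (hu_mem : ∀ i ∈ Finset.Icc 1 (n - 4), u i ∈ (({x, y, z} : Set V)ᶜ))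
    (hu_inj : ∀ i ∈ Finset.Icc 1 (n - 4), ∀ j ∈ Finset.Icc 1 (n - 4),
      u i = u j → i = j)
    (hadj : ∀ i ∈ Finset.Icc 1 (n - 4), (G i).Adj (u i) (u (i + 1)))
    -- w is the unique vertex outside V(C) ∪ {x, y, z}
    (hw_mem : w ∈ (({x, y, z} : Set V)ᶜ))
    (hw_notC : ∀ i ∈ Finset.Icc 1 (n - 4), u i ≠ w)
    (A B : Set ℕ)
    (hA : A = {s : ℕ | s ∈ Finset.Icc 1 (n - 4) ∧ (G (n - 3)).Adj w (u (s + 1))})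
    (hB : B = {s : ℕ | s ∈ Finset.Icc 1 (n - 4) ∧ (G (n - 2)).Adj w (u s)}) :
    A ∩ B = ∅ ∧ 2 * A.ncard = n - 5 ∧ 2 * B.ncard = n - 5 := by

  classical
  set m := n - 4 with hmdef
  have hm : 0 < m := by omega
  have key := key_no_insert n hn hV G x y z hxy hzx hzy hnoham u w hper hu_mem
    hu_inj hadj hw_mem hw_notC
  have hur : ∀ s, 1 ≤ s → u ((s - 1) % m + 1) = u s := fun s hs => u_r m u hper s hs
  have hAmem : ∀ s, s ∈ A ↔ (s ∈ Finset.Icc 1 m ∧ (G (n - 3)).Adj w (u (s + 1))) := by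
    intro s; rw [hA]; exact Iff.rfl
  have hBmem : ∀ s, s ∈ B ↔ (s ∈ Finset.Icc 1 m ∧ (G (n - 2)).Adj w (u s)) := by
    intro s; rw [hB]; exact Iff.rfl
  have hABdisj : ∀ s, s ∈ A → s ∈ B → False := by
    intro s hsA hsB
    rw [hAmem] at hsA
    rw [hBmem] at hsB
    obtain ⟨hsI, hsadj⟩ := hsA
    simp only [Finset.mem_Icc] at hsI
    exact key s hsI.1 (n - 2) (n - 3) (Or.inr rfl) (Or.inl rfl) (by omega) hsB.2 hsadj
  have hA2B : ∀ s ∈ A, ((s + 2 - 1) % m + 1) ∉ B := by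
    intro s hsA hcB
    rw [hAmem] at hsA
    rw [hBmem] at hcB
    obtain ⟨hsI, hsadj⟩ := hsA
    obtain ⟨hcI, hcadj⟩ := hcB
    rw [hur (s + 2) (by omega)] at hcadj
    have he : s + 2 = s + 1 + 1 := by omega
    rw [he] at hcadj
    simp only [Finset.mem_Icc] at hsI
    exact key (s + 1) (by omega) (n - 3) (n - 2) (Or.inl rfl) (Or.inr rfl)
      (by omega) hsadj hcadj
  have hAsub : A ⊆ ↑(Finset.Icc 1 m) := fun s hs => by
    exact_mod_cast ((hAmem s).1 hs).1
  have hBsub : B ⊆ ↑(Finset.Icc 1 m) := fun s hs => by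
    exact_mod_cast ((hBmem s).1 hs).1
  have hAfin : A.Finite := (Finset.finite_toSet _).subset hAsub
  have hBfin : B.Finite := (Finset.finite_toSet _).subset hBsub
  have hcov := covering n hn hV x y z hxy hzx hzy u w hu_mem hu_inj hw_mem hw_notC
  set idx : V → ℕ := fun v => if h : ∃ i ∈ Finset.Icc 1 m, u i = v then h.choose else 0
    with hidxdef
  have hidx : ∀ v ∈ (({x, y, z} : Set V)ᶜ), v ≠ w →
      idx v ∈ Finset.Icc 1 m ∧ u (idx v) = v := by
    intro v hv hvw
    rcases hcov v hv with rfl | ⟨i, hi, hui⟩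
    · exact absurd rfl hvw
    · have h : ∃ i ∈ Finset.Icc 1 m, u i = v := ⟨i, hi, hui⟩
      simp only [hidxdef, dif_pos h]
      exact ⟨h.choose_spec.1, h.choose_spec.2⟩
  have hxyz3 : ({x, y, z} : Set V).ncard ≤ 3 := by
    have h1 := Set.ncard_insert_le x ({y, z} : Set V)
    have h2 := Set.ncard_insert_le y ({z} : Set V)
    have h3 : ({z} : Set V).ncard = 1 := Set.ncard_singleton z
    omega
  -- lower bound for B
  have hBlb : n - 5 ≤ 2 * B.ncard := by
    have hNlb : n + 1 ≤ 2 * ((G (n - 2)).neighborSet w).ncard :=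
      hdeg (n - 2) (by simp only [Finset.mem_Icc]; omega) w
    set N := (G (n - 2)).neighborSet w with hNdef
    have hmap : ∀ v ∈ N \ {x, y, z}, idx v ∈ B ∧ u (idx v) = v := by
      intro v hv
      obtain ⟨hvN, hvT⟩ := hv
      have hadjwv : (G (n - 2)).Adj w v := hvN
      have hvw : v ≠ w := fun h => by subst h; exact (G (n - 2)).irrefl hadjwv
      obtain ⟨hI, hu'⟩ := hidx v hvT hvw
      refine ⟨?_, hu'⟩
      rw [hBmem]
      exact ⟨hI, by rw [hu']; exact hadjwv⟩
    have hinj : Set.InjOn idx (N \ {x, y, z}) := by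
      intro v hv v' hv' h
      rw [← (hmap v hv).2, ← (hmap v' hv').2, h]
    have hle : (N \ {x, y, z}).ncard ≤ B.ncard :=
      Set.ncard_le_ncard_of_injOn idx (fun v hv => (hmap v hv).1) hinj hBfin
    have hNfin : N.Finite := Set.toFinite _
    have hsplit : N.ncard ≤ (N \ {x, y, z}).ncard + ({x, y, z} : Set V).ncard := by
      calc N.ncard ≤ ((N \ {x, y, z}) ∪ {x, y, z}).ncard := Set.ncard_le_ncard
            (fun v hv => by
              by_cases h : v ∈ ({x, y, z} : Set V)
              · exact Set.mem_union_right _ h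
              · exact Set.mem_union_left _ ⟨hv, h⟩)
            (hNfin.diff.union (Set.toFinite _))
        _ ≤ _ := Set.ncard_union_le _ _
    omega
  -- lower bound for A
  have hAlb : n - 5 ≤ 2 * A.ncard := by
    have hNlb : n + 1 ≤ 2 * ((G (n - 3)).neighborSet w).ncard :=
      hdeg (n - 3) (by simp only [Finset.mem_Icc]; omega) w
    set N := (G (n - 3)).neighborSet w with hNdef
    set g : V → ℕ := fun v => if idx v = 1 then m else idx v - 1 with hgdef
    have hmap : ∀ v ∈ N \ {x, y, z}, g v ∈ A ∧ u (g v + 1) = v := by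
      intro v hv
      obtain ⟨hvN, hvT⟩ := hv
      have hadjwv : (G (n - 3)).Adj w v := hvN
      have hvw : v ≠ w := fun h => by subst h; exact (G (n - 3)).irrefl hadjwv
      obtain ⟨hI, hu'⟩ := hidx v hvT hvw
      simp only [Finset.mem_Icc] at hI
      have hgu : u (g v + 1) = v := by
        simp only [hgdef]
        by_cases h1 : idx v = 1
        · rw [if_pos h1]
          have e1 : m + 1 = 1 + m := by omega
          rw [e1, hper 1, ← h1]
          exact hu'
        · rw [if_neg h1]
          have e1 : idx v - 1 + 1 = idx v := by omega
          rw [e1]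
          exact hu'
      refine ⟨?_, hgu⟩
      rw [hAmem]
      refine ⟨?_, by rw [hgu]; exact hadjwv⟩
      simp only [hgdef, Finset.mem_Icc]
      by_cases h1 : idx v = 1
      · rw [if_pos h1]; omega
      · rw [if_neg h1]; omega
    have hinj : Set.InjOn g (N \ {x, y, z}) := by
      intro v hv v' hv' h
      rw [← (hmap v hv).2, ← (hmap v' hv').2, h]
    have hle : (N \ {x, y, z}).ncard ≤ A.ncard :=
      Set.ncard_le_ncard_of_injOn g (fun v hv => (hmap v hv).1) hinj hAfin
    have hNfin : N.Finite := Set.toFinite _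
    have hsplit : N.ncard ≤ (N \ {x, y, z}).ncard + ({x, y, z} : Set V).ncard := by
      calc N.ncard ≤ ((N \ {x, y, z}) ∪ {x, y, z}).ncard := Set.ncard_le_ncard
            (fun v hv => by
              by_cases h : v ∈ ({x, y, z} : Set V)
              · exact Set.mem_union_right _ h
              · exact Set.mem_union_left _ ⟨hv, h⟩)
            (hNfin.diff.union (Set.toFinite _))
        _ ≤ _ := Set.ncard_union_le _ _
    omega
  have goal1 : A ∩ B = ∅ := by
    ext s
    simp only [Set.mem_inter_iff, Set.mem_empty_iff_false, iff_false, not_and]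
    exact fun h1 h2 => hABdisj s h1 h2
  refine ⟨goal1, ?_⟩
  by_cases hclosed : ∀ s ∈ A, ((s + 2 - 1) % m + 1) ∈ A
  · exfalso
    have hApos : A.Nonempty := by
      rcases Set.eq_empty_or_nonempty A with h | h
      · rw [h, Set.ncard_empty] at hAlb; omega
      · exact h
    obtain ⟨a, ha⟩ := hApos
    have haI := ((hAmem a).1 ha).1
    simp only [Finset.mem_Icc] at haI
    have hmodd : Odd m := by
      obtain ⟨p, hp⟩ := hodd
      exact ⟨p - 2, by omega⟩
    have hall := orbit_all m hm hmodd A (fun s hs => by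
        have h0 := hclosed s hs
        have he : s + 2 - 1 = s + 1 := by omega
        rwa [he] at h0) a ha haI.1 haI.2
    have hBpos : B.Nonempty := by
      rcases Set.eq_empty_or_nonempty B with h | h
      · rw [h, Set.ncard_empty] at hBlb; omega
      · exact h
    obtain ⟨b, hb⟩ := hBpos
    have hbI := ((hBmem b).1 hb).1
    simp only [Finset.mem_Icc] at hbI
    exact hABdisj b (hall b hbI.1 hbI.2) hb
  · push_neg at hclosed
    obtain ⟨s₀, hs₀A, hs₀n⟩ := hclosed
    have hσI : (s₀ + 2 - 1) % m + 1 ∈ Finset.Icc 1 m := by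
      have := Nat.mod_lt (s₀ + 2 - 1) hm
      simp only [Finset.mem_Icc]
      omega
    have hσB : (s₀ + 2 - 1) % m + 1 ∉ B := hA2B s₀ hs₀A
    have hdisj : Disjoint (insert ((s₀ + 2 - 1) % m + 1) A) B := by
      rw [Set.disjoint_left]
      intro s hs
      rcases Set.mem_insert_iff.mp hs with rfl | hsA
      · exact hσB
      · exact fun hsB => hABdisj s hsA hsB
    have hsubU : insert ((s₀ + 2 - 1) % m + 1) A ∪ B ⊆ ↑(Finset.Icc 1 m) := by
      intro s hs
      rcases hs with hs | hs
      · rcases Set.mem_insert_iff.mp hs with rfl | hsA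
        · exact_mod_cast hσI
        · exact hAsub hsA
      · exact hBsub hs
    have hcard1 : (insert ((s₀ + 2 - 1) % m + 1) A ∪ B).ncard ≤ (Finset.Icc 1 m).card := by
      have h0 := Set.ncard_le_ncard hsubU (Finset.finite_toSet _)
      rwa [Set.ncard_coe_finset] at h0
    rw [Nat.card_Icc] at hcard1
    have hcard2 : (insert ((s₀ + 2 - 1) % m + 1) A ∪ B).ncard = A.ncard + 1 + B.ncard := by
      rw [Set.ncard_union_eq hdisj (hAfin.insert _) hBfin,
          Set.ncard_insert_of_notMem hs₀n hAfin]
    constructor <;> omega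
end
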